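/- arXiv:2506.10623 — 7 statements merged into one kernel-verified Lean document; each statement's English description precedes it below -/
import Mathlib

section
/- There exist C, c > 0 depending only on α such that |φ₀'(x)| ≤ C·exp(−c·|x|^{(2+α)/2}) for all x ∈ ℝ. -/
open MeasureTheory

/-- `φ` is an eigenfunction of the Sturm–Liouville operator `𝓛 = -d²/dx² + |x|^α`
for the eigenvalue `lam`. -/
def IsEigenfunction (α lam : ℝ) (φ : ℝ → ℝ) : Prop :=
  ContDiff ℝ 2 φ ∧ φ ≠ 0 ∧ Integrable (fun x : ℝ => (φ x) ^ 2) ∧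
    ∀ x : ℝ, -(deriv (deriv φ) x) + |x| ^ α * φ x = lam * φ x

/-!
For large `x` the potential dominates: `φ'' = (x ^ α - λ) φ ≥ (x ^ α / 4) φ > 0`, so `φ'` is
increasing there, and it must stay `≤ 0` because `φ²` is integrable. Compare `φ` with
`w = exp (-x ^ θ / (2 + α))`, `θ = (2 + α) / 2`, which satisfies `w'' ≤ (x ^ α / 4) w`: the
Wronskian `φ w' - φ' w` is then decreasing, and if it ever became negative it would keep
`φ ≥ const > 0` (as `x ^ (α / 2) w` is bounded), so it stays nonnegative, `φ / w` decreases and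
`φ ≤ C w`. Convexity gives `|φ' x| ≤ φ (x - 1) ≤ C w (x - 1) ≤ C exp (-x ^ θ / (2 (2 + α)))`.
The left tail follows by reflecting `φ`, and the bounded middle by continuity of `φ'`.
-/

open Filter Asymptotics Set

lemma not_forall_le_of_integrable_sq {f : ℝ → ℝ} (hint : Integrable fun x => f x ^ 2)
    {ε : ℝ} (hε : 0 < ε) (a : ℝ) : ¬ ∀ x, a ≤ x → ε ≤ f x := by
  intro h
  have hle : volume (Ici a) ≤ volume {x | ε ^ 2 ≤ f x ^ 2} :=
    measure_mono fun x hx => pow_le_pow_left₀ hε.le (h x hx) 2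
  rw [Real.volume_Ici] at hle
  exact not_top_lt (hle.trans_lt (hint.measure_ge_lt_top (pow_pos hε 2)))

lemma monotoneOn_of_hasDerivAt_nonneg {f f' : ℝ → ℝ} {s : Set ℝ} (hs : Convex ℝ s)
    (hf : ∀ x ∈ s, HasDerivAt f (f' x) x) (hf'₀ : ∀ x ∈ s, 0 ≤ f' x) : MonotoneOn f s :=
  monotoneOn_of_hasDerivWithinAt_nonneg hs
    (fun x hx => (hf x hx).continuousAt.continuousWithinAt)
    (fun x hx => (hf x (interior_subset hx)).hasDerivWithinAt)
    fun x hx => hf'₀ x (interior_subset hx)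

lemma antitoneOn_of_hasDerivAt_nonpos {f f' : ℝ → ℝ} {s : Set ℝ} (hs : Convex ℝ s)
    (hf : ∀ x ∈ s, HasDerivAt f (f' x) x) (hf'₀ : ∀ x ∈ s, f' x ≤ 0) : AntitoneOn f s :=
  antitoneOn_of_hasDerivWithinAt_nonpos hs
    (fun x hx => (hf x hx).continuousAt.continuousWithinAt)
    (fun x hx => (hf x (interior_subset hx)).hasDerivWithinAt)
    fun x hx => hf'₀ x (interior_subset hx)

lemma nonpos_of_monotoneOn_of_integrable_sq {f f' : ℝ → ℝ} {a : ℝ}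
    (hf : ∀ x ∈ Ici a, HasDerivAt f (f' x) x) (hmono : MonotoneOn f' (Ici a)) (hfa : 0 < f a)
    (hint : Integrable fun x => f x ^ 2) : f' a ≤ 0 := by
  by_contra! h
  have hf_mono : MonotoneOn f (Ici a) := monotoneOn_of_hasDerivAt_nonneg (convex_Ici a) hf
    fun x hx => h.le.trans (hmono self_mem_Ici hx hx)
  exact not_forall_le_of_integrable_sq hint hfa a fun x hx => hf_mono self_mem_Ici hx hx

lemma abs_le_sub_one_of_monotoneOn {f f' : ℝ → ℝ} {x : ℝ}
    (hf : ∀ y ∈ Icc (x - 1) x, HasDerivAt f (f' y) y) (hmono : MonotoneOn f' (Icc (x - 1) x))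
    (hf'x : f' x ≤ 0) (hfx : 0 ≤ f x) : |f' x| ≤ f (x - 1) := by
  obtain ⟨ξ, hξ, hslope⟩ := exists_hasDerivAt_eq_slope f f' (sub_one_lt x)
    (fun y hy => (hf y hy).continuousAt.continuousWithinAt)
    fun y hy => hf y (Ioo_subset_Icc_self hy)
  rw [sub_sub_cancel, div_one] at hslope
  have := hmono (Ioo_subset_Icc_self hξ) (right_mem_Icc.2 (sub_one_lt x).le) hξ.2.le
  rw [abs_of_nonpos hf'x]
  linarith

def wronskian (f f' g g' : ℝ → ℝ) (x : ℝ) : ℝ := f x * g' x - f' x * g x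

lemma antitoneOn_wronskian {f f' g g' g'' q : ℝ → ℝ} {s : Set ℝ} (hs : Convex ℝ s)
    (hf : ∀ x ∈ s, HasDerivAt f (f' x) x) (hf' : ∀ x ∈ s, HasDerivAt f' (q x * f x) x)
    (hg : ∀ x ∈ s, HasDerivAt g (g' x) x) (hg' : ∀ x ∈ s, HasDerivAt g' (g'' x) x)
    (hf₀ : ∀ x ∈ s, 0 ≤ f x) (hsuper : ∀ x ∈ s, g'' x ≤ q x * g x) :
    AntitoneOn (wronskian f f' g g') s := by
  refine antitoneOn_of_hasDerivAt_nonpos hs (f' := fun x => f x * (g'' x - q x * g x))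
    (fun x hx => ?_) fun x hx => mul_nonpos_of_nonneg_of_nonpos (hf₀ x hx)
      (sub_nonpos.2 (hsuper x hx))
  exact (((hf x hx).mul (hg' x hx)).sub ((hf' x hx).mul (hg x hx))).congr_deriv (by ring)

lemma antitoneOn_div_of_wronskian_nonneg {f f' g g' : ℝ → ℝ} {s : Set ℝ} (hs : Convex ℝ s)
    (hf : ∀ x ∈ s, HasDerivAt f (f' x) x) (hg : ∀ x ∈ s, HasDerivAt g (g' x) x)
    (hg₀ : ∀ x ∈ s, g x ≠ 0) (hW : ∀ x ∈ s, 0 ≤ wronskian f f' g g' x) :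
    AntitoneOn (fun x => f x / g x) s :=
  antitoneOn_of_hasDerivAt_nonpos hs (fun x hx => (hf x hx).div (hg x hx) (hg₀ x hx))
    fun x hx => div_nonpos_of_nonpos_of_nonneg (by linarith [hW x hx, wronskian.eq_1 f f' g g' x])
      (sq_nonneg _)

lemma Continuous.isBigO_top_of_atTop_of_atBot {f g : ℝ → ℝ} (hf : Continuous f)
    (hg : Continuous g) (hg₀ : ∀ x, g x ≠ 0) (hTop : f =O[atTop] g) (hBot : f =O[atBot] g) :
    f =O[⊤] g := by
  have hratio (l : Filter ℝ) (h : f =O[l] g) : (fun x => f x / g x) =O[l] (1 : ℝ → ℝ) :=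
    (h.mul (isBigO_refl (fun x => (g x)⁻¹) l)).congr (fun x => rfl)
      fun x => mul_inv_cancel₀ (hg₀ x)
  obtain ⟨C, hC⟩ := isBounded_iff_forall_norm_le.1
    ((hf.div hg hg₀).isBounded_range_iff_isBigO_atTop_atBot.2 ⟨hratio _ hTop, hratio _ hBot⟩)
  refine isBigO_top.2 ⟨C, fun x => ?_⟩
  have := hC _ (mem_range_self x)
  rwa [Pi.div_apply, norm_div, div_le_iff₀ (norm_pos_iff.2 (hg₀ x))] at this

lemma rpow_div_two_le_sub_one_rpow {θ x : ℝ} (hθ : 1 ≤ θ) (hx : 2 * θ ≤ x) :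
    x ^ θ / 2 ≤ (x - 1) ^ θ := by
  have hx₀ : 0 < x := by linarith
  have hinv : x⁻¹ ≤ 1 := inv_le_one_of_one_le₀ (by linarith)
  have hbernoulli : 1 + θ * -x⁻¹ ≤ (1 + -x⁻¹) ^ θ :=
    one_add_mul_self_le_rpow_one_add (by linarith) hθ
  have hhalf : θ * x⁻¹ ≤ 1 / 2 := by
    rw [← div_eq_mul_inv, div_le_iff₀ hx₀]; linarith
  have hsplit : x - 1 = x * (1 + -x⁻¹) := by field_simp; ring
  rw [hsplit, Real.mul_rpow hx₀.le (by linarith)]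
  nlinarith [Real.rpow_nonneg hx₀.le θ]

/-- Its logarithmic derivative is `-x ^ (α / 2) / 2`, so for `x > 0` it is a supersolution of
`w'' = (x ^ α / 4) w`. -/
noncomputable def decayProfile (α x : ℝ) : ℝ := Real.exp (-(x ^ ((2 + α) / 2) / (2 + α)))

noncomputable def decayProfileDeriv (α x : ℝ) : ℝ := -(x ^ (α / 2) / 2) * decayProfile α x

lemma decayProfile_pos (α x : ℝ) : 0 < decayProfile α x := Real.exp_pos _

section decayProfile

variable {α x : ℝ}

lemma hasDerivAt_decayProfile (hα : 0 ≤ α) (hx : 0 < x) :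
    HasDerivAt (decayProfile α) (decayProfileDeriv α x) x := by
  have h : HasDerivAt (fun y => -(y ^ ((2 + α) / 2) / (2 + α)))
      (-((2 + α) / 2 * x ^ ((2 + α) / 2 - 1) / (2 + α))) x :=
    ((Real.hasDerivAt_rpow_const (Or.inl hx.ne')).div_const _).neg
  refine h.exp.congr_deriv ?_
  rw [decayProfileDeriv, decayProfile, show (2 + α) / 2 - 1 = α / 2 by ring]
  field_simp

lemma hasDerivAt_decayProfileDeriv (hα : 0 ≤ α) (hx : 0 < x) :
    HasDerivAt (decayProfileDeriv α)
      ((x ^ α / 4 - α / 4 * x ^ (α / 2 - 1)) * decayProfile α x) x := by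
  have h : HasDerivAt (fun y => -(y ^ (α / 2) / 2)) (-(α / 2 * x ^ (α / 2 - 1) / 2)) x :=
    ((Real.hasDerivAt_rpow_const (Or.inl hx.ne')).div_const _).neg
  refine (h.mul (hasDerivAt_decayProfile hα hx)).congr_deriv ?_
  have hsq : x ^ (α / 2) * x ^ (α / 2) = x ^ α := by
    rw [← Real.rpow_add hx]; ring_nf
  rw [decayProfileDeriv]
  linear_combination (decayProfile α x / 4) * hsq

lemma rpow_mul_decayProfile_le (hα : 0 ≤ α) (hx : 0 < x) :
    x ^ (α / 2) * decayProfile α x ≤ (2 + α) / x := by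
  have hy : x ^ (α / 2) = (2 + α) / x * (x ^ ((2 + α) / 2) / (2 + α)) := by
    rw [show (2 + α) / 2 = α / 2 + 1 by ring, Real.rpow_add_one hx.ne']
    field_simp
  have hyexp (y : ℝ) : y * Real.exp (-y) ≤ 1 := by
    rw [Real.exp_neg, ← div_eq_mul_inv, div_le_one (Real.exp_pos y)]
    linarith [Real.add_one_le_exp y]
  rw [hy, mul_assoc, decayProfile]
  exact mul_le_of_le_one_right (by positivity) (hyexp _)

lemma decayProfile_sub_one_le (hα : 0 ≤ α) (hx : 2 + α ≤ x) :
    decayProfile α (x - 1) ≤ Real.exp (-(1 / (2 * (2 + α))) * |x| ^ ((2 + α) / 2)) := by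
  have hhalf := rpow_div_two_le_sub_one_rpow (θ := (2 + α) / 2) (x := x) (by linarith) (by linarith)
  rw [decayProfile, Real.exp_le_exp, abs_of_nonneg (by linarith)]
  have h2α : 0 < 2 + α := by linarith
  rw [neg_mul, neg_le_neg_iff, div_mul_eq_mul_div, one_mul, div_le_div_iff₀ (by positivity) h2α]
  nlinarith

end decayProfile

section tail

variable {α R : ℝ} {f f' : ℝ → ℝ}

lemma wronskian_decayProfile_nonneg (hα : 0 ≤ α) (hR : 1 ≤ R)
    (hW : AntitoneOn (wronskian f f' (decayProfile α) (decayProfileDeriv α)) (Ici R))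
    (hf' : ∀ x ∈ Ici R, f' x ≤ 0) (hint : Integrable fun x => f x ^ 2) :
    ∀ x ∈ Ici R, 0 ≤ wronskian f f' (decayProfile α) (decayProfileDeriv α) x := by
  intro x₀ hx₀
  by_contra! hneg
  set γ := -wronskian f f' (decayProfile α) (decayProfileDeriv α) x₀ with hγdef
  have hγ₀ : 0 < γ := by linarith
  refine not_forall_le_of_integrable_sq hint (ε := 2 * γ / (2 + α)) (by positivity) x₀
    fun x hx => ?_
  have hxR : x ∈ Ici R := mem_Ici.2 (le_trans hx₀ hx)
  have hxpos : 0 < x := by linarith [mem_Ici.1 hxR]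
  have hγ : γ ≤ x ^ (α / 2) * decayProfile α x * f x / 2 + f' x * decayProfile α x := by
    have := hW hx₀ hxR hx
    simp only [hγdef, wronskian, decayProfileDeriv] at this ⊢
    linarith
  have hf'w : f' x * decayProfile α x ≤ 0 :=
    mul_nonpos_of_nonpos_of_nonneg (hf' x hxR) (decayProfile_pos α x).le
  have hpw : 0 ≤ x ^ (α / 2) * decayProfile α x :=
    mul_nonneg (Real.rpow_nonneg hxpos.le _) (decayProfile_pos α x).le
  have hfx : 0 < f x := by
    by_contra! h
    nlinarith [mul_nonpos_of_nonneg_of_nonpos hpw h]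
  have hbound : x ^ (α / 2) * decayProfile α x ≤ 2 + α :=
    (rpow_mul_decayProfile_le hα hxpos).trans
      (div_le_self (by linarith) (by linarith [mem_Ici.1 hxR]))
  rw [div_le_iff₀ (by linarith)]
  nlinarith

theorem le_mul_decayProfile_of_hasDerivAt {q : ℝ → ℝ} (hα : 0 ≤ α) (hR : 1 ≤ R)
    (hf : ∀ x ∈ Ici R, HasDerivAt f (f' x) x) (hf' : ∀ x ∈ Ici R, HasDerivAt f' (q x * f x) x)
    (hq : ∀ x ∈ Ici R, x ^ α / 4 ≤ q x) (hf₀ : ∀ x ∈ Ici R, 0 ≤ f x)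
    (hf'_nonpos : ∀ x ∈ Ici R, f' x ≤ 0) (hint : Integrable fun x => f x ^ 2) :
    ∀ x ∈ Ici R, f x ≤ f R / decayProfile α R * decayProfile α x := by
  have hpos : ∀ x ∈ Ici R, 0 < x := fun x hx => by linarith [mem_Ici.1 hx]
  have hsuper : ∀ x ∈ Ici R, (x ^ α / 4 - α / 4 * x ^ (α / 2 - 1)) * decayProfile α x ≤
      q x * decayProfile α x := fun x hx => by
    have : 0 ≤ α / 4 * x ^ (α / 2 - 1) := by have := (hpos x hx).le; positivity
    exact mul_le_mul_of_nonneg_right (by linarith [hq x hx]) (decayProfile_pos α x).le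
  have hW := antitoneOn_wronskian (convex_Ici R) hf hf'
    (fun x hx => hasDerivAt_decayProfile hα (hpos x hx))
    (fun x hx => hasDerivAt_decayProfileDeriv hα (hpos x hx)) hf₀ hsuper
  have hanti := antitoneOn_div_of_wronskian_nonneg (convex_Ici R) hf
    (fun x hx => hasDerivAt_decayProfile hα (hpos x hx)) (fun x _ => (decayProfile_pos α x).ne')
    (wronskian_decayProfile_nonneg hα hR hW hf'_nonpos hint)
  intro x hx
  have := hanti self_mem_Ici hx hx
  rwa [div_le_iff₀ (decayProfile_pos α x)] at this

end tail

namespace IsEigenfunction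

variable {α lam : ℝ} {φ : ℝ → ℝ}

lemma differentiable (h : IsEigenfunction α lam φ) : Differentiable ℝ φ :=
  h.1.differentiable (by norm_num)

lemma contDiff_deriv (h : IsEigenfunction α lam φ) : ContDiff ℝ 1 (deriv φ) :=
  (contDiff_succ_iff_deriv.1 h.1).2.2

lemma hasDerivAt_deriv (h : IsEigenfunction α lam φ) (x : ℝ) :
    HasDerivAt (deriv φ) ((|x| ^ α - lam) * φ x) x := by
  have := ((h.contDiff_deriv.differentiable one_ne_zero) x).hasDerivAt
  rwa [show deriv (deriv φ) x = (|x| ^ α - lam) * φ x by linarith [h.2.2.2 x]] at this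

lemma comp_neg (h : IsEigenfunction α lam φ) : IsEigenfunction α lam fun x => φ (-x) := by
  refine ⟨h.1.comp contDiff_neg, fun h0 => h.2.1 (funext fun x => ?_), h.2.2.1.comp_neg,
    fun x => ?_⟩
  · simpa using congrFun h0 (-x)
  · have hd : deriv (fun y => φ (-y)) = fun y => -deriv φ (-y) := funext fun y => deriv_comp_neg φ y
    rw [hd, deriv.fun_neg, deriv_comp_neg, neg_neg]
    simpa using h.2.2.2 (-x)

theorem deriv_isBigO_atTop (hα : 0 < α) (h : IsEigenfunction α lam φ) (hpos : ∀ x, 0 < φ x) :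
    deriv φ =O[atTop] fun x => Real.exp (-(1 / (2 * (2 + α))) * |x| ^ ((2 + α) / 2)) := by
  obtain ⟨R, hR⟩ := ((eventually_ge_atTop 1).and
    ((tendsto_rpow_atTop hα).eventually_ge_atTop (4 / 3 * lam))).exists_forall_of_atTop
  have hq : ∀ x ∈ Ici R, x ^ α / 4 ≤ |x| ^ α - lam := fun x hx => by
    obtain ⟨hx1, hxα⟩ := hR x hx
    rw [abs_of_pos (by linarith)]
    linarith
  have hf : ∀ x ∈ Ici R, HasDerivAt φ (deriv φ x) x := fun x _ => (h.differentiable x).hasDerivAt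
  have hf' : ∀ x ∈ Ici R, HasDerivAt (deriv φ) ((|x| ^ α - lam) * φ x) x :=
    fun x _ => h.hasDerivAt_deriv x
  have hmono : MonotoneOn (deriv φ) (Ici R) := monotoneOn_of_hasDerivAt_nonneg (convex_Ici R) hf'
    fun x hx => mul_nonneg (le_trans (by have := (hR x hx).1; positivity) (hq x hx)) (hpos x).le
  have hnonpos : ∀ x ∈ Ici R, deriv φ x ≤ 0 := fun x hx =>
    nonpos_of_monotoneOn_of_integrable_sq (fun y hy => hf y (Ici_subset_Ici.2 hx hy))
      (hmono.mono (Ici_subset_Ici.2 hx)) (hpos x) h.2.2.1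
  have hdecay := le_mul_decayProfile_of_hasDerivAt hα.le (hR R le_rfl).1 hf hf' hq
    (fun x _ => (hpos x).le) hnonpos h.2.2.1
  calc deriv φ =O[atTop] fun x => φ (x - 1) := by
        refine IsBigO.of_bound 1 ?_
        filter_upwards [eventually_ge_atTop (R + 1)] with x hx
        have hI : Icc (x - 1) x ⊆ Ici R := fun y hy => mem_Ici.2 (by linarith [hy.1])
        rw [Real.norm_eq_abs, Real.norm_of_nonneg (hpos _).le, one_mul]
        exact abs_le_sub_one_of_monotoneOn (fun y hy => hf y (hI hy)) (hmono.mono hI)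
          (hnonpos x (hI (right_mem_Icc.2 (by linarith)))) (hpos x).le
    _ =O[atTop] fun x => decayProfile α (x - 1) := by
        refine IsBigO.comp_tendsto (g := fun x => decayProfile α x) ?_
          (tendsto_atTop_add_const_right _ (-1) tendsto_id)
        refine IsBigO.of_bound (φ R / decayProfile α R) ?_
        filter_upwards [eventually_ge_atTop R] with x hx
        rw [Real.norm_of_nonneg (hpos _).le, Real.norm_of_nonneg (decayProfile_pos α x).le]
        exact hdecay x hx
    _ =O[atTop] _ := by
        refine IsBigO.of_bound 1 ?_
        filter_upwards [eventually_ge_atTop (2 + α)] with x hx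
        rw [Real.norm_of_nonneg (decayProfile_pos α _).le, Real.norm_of_nonneg (Real.exp_pos _).le,
          one_mul]
        exact decayProfile_sub_one_le hα.le hx

end IsEigenfunction

theorem ground_state_derivative_tail_general (α : ℝ) (hα : 0 < α)
    (lam₀ : ℝ) (φ₀ : ℝ → ℝ)
    (hφ : IsEigenfunction α lam₀ φ₀)
    (hpos : ∀ x : ℝ, 0 < φ₀ x) :
    ∃ C c : ℝ, 0 < C ∧ 0 < c ∧
      ∀ x : ℝ, |deriv φ₀ x| ≤ C * Real.exp (-c * |x| ^ ((2 + α) / 2)) := by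
  have hTop := hφ.deriv_isBigO_atTop hα hpos
  have hBot : deriv φ₀ =O[atBot]
      fun x => Real.exp (-(1 / (2 * (2 + α))) * |x| ^ ((2 + α) / 2)) := by
    have := (hφ.comp_neg.deriv_isBigO_atTop hα fun x => hpos (-x)).comp_tendsto
      tendsto_neg_atBot_atTop
    simpa [Function.comp_def, deriv_comp_neg] using this
  obtain ⟨C, hC, hbound⟩ := (hφ.contDiff_deriv.continuous.isBigO_top_of_atTop_of_atBot
    (by fun_prop (disch := linarith)) (fun x => (Real.exp_pos _).ne') hTop hBot).exists_pos
  refine ⟨C, 1 / (2 * (2 + α)), hC, by positivity, fun x => ?_⟩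
  simpa [abs_of_pos (Real.exp_pos _)] using isBigOWith_top.1 hbound x

/-- Tail bound for the derivative of the ground state: there exist `C, c > 0` such that
`|φ₀'(x)| ≤ C exp(-c |x|^{(2+α)/2})` for all `x`. -/
theorem ground_state_derivative_tail (α : ℝ) (hα : 0 < α)
    (lam₀ : ℝ) (hlam₀ : 0 < lam₀) (φ₀ : ℝ → ℝ)
    (hφ : IsEigenfunction α lam₀ φ₀)
    (hpos : ∀ x : ℝ, 0 < φ₀ x)
    (hnorm : (∫ x : ℝ, (φ₀ x) ^ 2) = 1) :
    ∃ C c : ℝ, 0 < C ∧ 0 < c ∧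
      ∀ x : ℝ, |deriv φ₀ x| ≤ C * Real.exp (-c * |x| ^ ((2 + α) / 2)) :=
  ground_state_derivative_tail_general α hα lam₀ φ₀ hφ hpos
end

section
/- Let λ > 0 be an eigenvalue of 𝓛 and φ an eigenfunction for λ. Then φ has no zero in [λ^{1/α}, ∞). Moreover, if φ(x) > 0 for all x ≥ λ^{1/α}, then φ is convex on [λ^{1/α}, ∞) and φ'(x) < 0 for all x ≥ λ^{1/α}, so φ is strictly decreasing on [λ^{1/α}, ∞). -/
open MeasureTheory

/-- `lam` is an eigenvalue of the Sturm–Liouville operator `𝓛 = -d²/dx² + |x|^α`. -/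
def IsEigenvalue (α lam : ℝ) : Prop := ∃ φ : ℝ → ℝ, IsEigenfunction α lam φ

/-!
On `[λ^{1/α}, ∞)` the potential `q x = |x|^α - λ` is nonnegative and the equation reads
`φ'' = q φ`. At a zero `x₀` of `φ` there, `(φ φ')' = φ'^2 + q φ^2 ≥ 0` makes `φ φ' ≥ 0`, so `φ^2`
is nondecreasing on `[x₀, ∞)`; square integrability forces `φ = 0` on that ray, and uniqueness for
the linear equation then gives `φ ≡ 0`. If `φ > 0` on the ray, then `φ'' = q φ ≥ 0`, so `φ` is
convex there, and `φ'(x₀) ≥ 0` at some `x₀` would make `φ`, hence `φ^2`, nondecreasing from `x₀` on,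
again contradicting integrability.
-/

open Set Filter Topology

theorem monotoneOn_of_deriv_nonneg_of_differentiable {D : Set ℝ} (hD : Convex ℝ D) {f : ℝ → ℝ}
    (hf : Differentiable ℝ f) (hf' : ∀ x ∈ D, 0 ≤ deriv f x) : MonotoneOn f D :=
  monotoneOn_of_deriv_nonneg hD hf.continuous.continuousOn hf.differentiableOn
    fun x hx ↦ hf' x (interior_subset hx)

theorem MonotoneOn.nonpos_of_integrableOn_Ici {f : ℝ → ℝ} {a : ℝ} (hf : MonotoneOn f (Ici a))
    (hint : IntegrableOn f (Ici a)) {x : ℝ} (hx : a ≤ x) : f x ≤ 0 := by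
  by_contra! hpos
  have hconst : IntegrableOn (fun _ ↦ f x) (Ici x) := by
    refine (hint.mono_set (Ici_subset_Ici.mpr hx)).mono' aestronglyMeasurable_const ?_
    filter_upwards [ae_restrict_mem measurableSet_Ici] with y hy
    rw [Real.norm_eq_abs, abs_of_pos hpos]
    exact hf hx (le_trans hx hy) hy
  simp [Real.volume_Ici, hpos.ne'] at hconst

section SecondOrderLinear

variable {φ q : ℝ → ℝ}

theorem eq_zero_of_deriv_deriv_eq_mul (hφ : Differentiable ℝ φ) (hφ' : Differentiable ℝ (deriv φ))
    (hq : Continuous q) (heq : ∀ x, deriv (deriv φ) x = q x * φ x) {x₀ : ℝ} (h₀ : φ x₀ = 0)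
    (h₁ : deriv φ x₀ = 0) : φ = 0 := by
  funext y
  set R := |x₀| + |y| + 1 with hR
  obtain ⟨M, hM⟩ := (isCompact_Icc (a := -R) (b := R)).exists_bound_of_continuousOn
    hq.continuousOn
  let v : ℝ → ℝ × ℝ → ℝ × ℝ := fun t p ↦ (p.2, q t * p.1)
  have hlip : ∀ t ∈ Ioo (-R) R, LipschitzOnWith (max 1 M.toNNReal) (v t) univ := by
    intro t ht
    have hqt : ‖q t‖₊ ≤ M.toNNReal := by
      rw [← NNReal.coe_le_coe, coe_nnnorm, Real.coe_toNNReal', le_max_iff]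
      exact Or.inl (hM t (Ioo_subset_Icc_self ht))
    refine (LipschitzWith.weaken (K := max 1 (‖q t‖₊ * 1)) ?_ ?_).lipschitzOnWith
    · exact LipschitzWith.prod_snd.prodMk ((lipschitzWith_smul (q t)).comp LipschitzWith.prod_fst)
    · rw [mul_one]; exact max_le_max le_rfl hqt
  have hsol : ∀ t, HasDerivAt (fun t ↦ (φ t, deriv φ t)) (v t (φ t, deriv φ t)) t := fun t ↦ by
    simpa only [v, ← heq] using (hφ t).hasDerivAt.prodMk (hφ' t).hasDerivAt
  have hzero : ∀ t, HasDerivAt (fun _ ↦ (0 : ℝ × ℝ)) (v t 0) t := fun t ↦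
    (hasDerivAt_const t (0 : ℝ × ℝ)).congr_deriv (by ext <;> simp [v])
  have hmem : ∀ z : ℝ, |z| < R → z ∈ Ioo (-R) R := fun z hz ↦ abs_lt.mp hz
  have hEq := ODE_solution_unique_of_mem_Ioo hlip (hmem x₀ (by linarith [abs_nonneg y]))
    (fun t _ ↦ ⟨hsol t, mem_univ _⟩) (fun t _ ↦ ⟨hzero t, mem_univ _⟩) (by simp [h₀, h₁])
  exact congrArg Prod.fst (hEq (hmem y (by linarith [abs_nonneg x₀])))

theorem apply_ne_zero_of_nonneg_on_Ici (hφ : Differentiable ℝ φ) (hφ' : Differentiable ℝ (deriv φ))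
    (hq : Continuous q) (heq : ∀ x, deriv (deriv φ) x = q x * φ x)
    (hne : φ ≠ 0) (hint : Integrable fun x ↦ φ x ^ 2) {x₀ : ℝ} (hq₀ : ∀ x ∈ Ici x₀, 0 ≤ q x) :
    φ x₀ ≠ 0 := by
  intro h₀
  have hψ : ∀ x, HasDerivAt (fun x ↦ φ x * deriv φ x) (deriv φ x ^ 2 + q x * φ x ^ 2) x :=
    fun x ↦ (hφ x).hasDerivAt.mul (hφ' x).hasDerivAt |>.congr_deriv (by rw [heq]; ring)
  have hψ_nonneg : ∀ x ∈ Ici x₀, 0 ≤ φ x * deriv φ x := by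
    have hmono : MonotoneOn (fun x ↦ φ x * deriv φ x) (Ici x₀) :=
      monotoneOn_of_deriv_nonneg_of_differentiable (convex_Ici x₀)
        (fun x ↦ (hψ x).differentiableAt) fun x hx ↦ by
          rw [(hψ x).deriv]; exact add_nonneg (sq_nonneg _) (mul_nonneg (hq₀ x hx) (sq_nonneg _))
    intro x hx
    simpa [h₀] using hmono self_mem_Ici hx hx
  have hsq : ∀ x, HasDerivAt (fun x ↦ φ x ^ 2) (2 * (φ x * deriv φ x)) x := fun x ↦
    (hφ x).hasDerivAt.pow 2 |>.congr_deriv (by ring)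
  have hsq_mono : MonotoneOn (fun x ↦ φ x ^ 2) (Ici x₀) :=
    monotoneOn_of_deriv_nonneg_of_differentiable (convex_Ici x₀)
      (fun x ↦ (hsq x).differentiableAt) fun x hx ↦ by
        rw [(hsq x).deriv]; linarith [hψ_nonneg x hx]
  have hvanish : ∀ x ∈ Ici x₀, φ x = 0 := fun x hx ↦
    pow_eq_zero_iff two_ne_zero |>.mp <|
      le_antisymm (hsq_mono.nonpos_of_integrableOn_Ici hint.integrableOn hx) (sq_nonneg _)
  have hφ_eventually : φ =ᶠ[𝓝 (x₀ + 1)] fun _ ↦ 0 :=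
    eventually_of_mem (Ioi_mem_nhds (lt_add_one x₀)) fun x hx ↦ hvanish x (mem_Ici_of_Ioi hx)
  refine hne (eq_zero_of_deriv_deriv_eq_mul hφ hφ' hq heq (x₀ := x₀ + 1)
    (hvanish _ (by simp)) ?_)
  rw [hφ_eventually.deriv_eq, deriv_const]

section PositiveOnIci

variable {a : ℝ}

theorem monotoneOn_deriv_of_nonneg_on_Ici (hφ' : Differentiable ℝ (deriv φ))
    (heq : ∀ x, deriv (deriv φ) x = q x * φ x) (hq : ∀ x ∈ Ici a, 0 ≤ q x)
    (hpos : ∀ x ∈ Ici a, 0 < φ x) : MonotoneOn (deriv φ) (Ici a) :=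
  monotoneOn_of_deriv_nonneg_of_differentiable (convex_Ici a) hφ' fun x hx ↦ by
    rw [heq]; exact mul_nonneg (hq x hx) (hpos x hx).le

theorem deriv_neg_of_nonneg_on_Ici (hφ : Differentiable ℝ φ)
    (hφ' : Differentiable ℝ (deriv φ)) (heq : ∀ x, deriv (deriv φ) x = q x * φ x)
    (hint : Integrable fun x ↦ φ x ^ 2) (hq : ∀ x ∈ Ici a, 0 ≤ q x)
    (hpos : ∀ x ∈ Ici a, 0 < φ x) {x₀ : ℝ} (hx₀ : a ≤ x₀) : deriv φ x₀ < 0 := by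
  by_contra! hd₀
  have hmono : MonotoneOn φ (Ici x₀) :=
    monotoneOn_of_deriv_nonneg_of_differentiable (convex_Ici x₀) hφ fun x hx ↦
      hd₀.trans (monotoneOn_deriv_of_nonneg_on_Ici hφ' heq hq hpos hx₀ (hx₀.trans hx) hx)
  have hsq_mono : MonotoneOn (fun x ↦ φ x ^ 2) (Ici x₀) := fun x hx y hy hxy ↦
    pow_le_pow_left₀ (hpos x (hx₀.trans hx)).le (hmono hx hy hxy) 2
  have := hsq_mono.nonpos_of_integrableOn_Ici hint.integrableOn le_rfl
  exact (pow_pos (hpos x₀ hx₀) 2).not_ge this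

end PositiveOnIci

end SecondOrderLinear

theorem le_abs_rpow_of_rpow_one_div_le {α lam x : ℝ} (hα : 0 < α) (hlam : 0 ≤ lam)
    (hx : lam ^ (1 / α) ≤ x) : lam ≤ |x| ^ α := by
  have hx₀ : 0 ≤ x := (Real.rpow_nonneg hlam _).trans hx
  rw [abs_of_nonneg hx₀, ← Real.rpow_inv_le_iff_of_pos hlam hx₀ hα, ← one_div]
  exact hx

theorem eigenfunction_convex_decreasing_general (α : ℝ) (hα : 0 < α) (lam : ℝ) (hpos : 0 < lam)
    (φ : ℝ → ℝ) (hφ : IsEigenfunction α lam φ) :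
    (∀ x : ℝ, lam ^ (1 / α) ≤ x → φ x ≠ 0) ∧
    ((∀ x : ℝ, lam ^ (1 / α) ≤ x → 0 < φ x) →
      ConvexOn ℝ (Set.Ici (lam ^ (1 / α))) φ ∧
      (∀ x : ℝ, lam ^ (1 / α) ≤ x → deriv φ x < 0) ∧
      StrictAntiOn φ (Set.Ici (lam ^ (1 / α)))) := by
  obtain ⟨hC2, hne, hint, heq⟩ := hφ
  have hd : Differentiable ℝ φ := hC2.differentiable (by norm_num)
  have hd' : Differentiable ℝ (deriv φ) := by
    simpa using hC2.differentiable_iteratedDeriv 1 (by norm_num)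
  have hq : Continuous fun x : ℝ ↦ |x| ^ α - lam :=
    (continuous_abs.rpow_const fun _ ↦ Or.inr hα.le).sub continuous_const
  have heq' : ∀ x, deriv (deriv φ) x = (|x| ^ α - lam) * φ x := fun x ↦ by linarith [heq x]
  have hq_nonneg : ∀ x ∈ Ici (lam ^ (1 / α)), 0 ≤ |x| ^ α - lam := fun x hx ↦
    sub_nonneg.mpr (le_abs_rpow_of_rpow_one_div_le hα hpos.le hx)
  refine ⟨fun x hx ↦ apply_ne_zero_of_nonneg_on_Ici hd hd' hq heq' hne hint
    fun y hy ↦ hq_nonneg y (hx.trans hy), fun hφpos ↦ ?_⟩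
  have hderiv_neg : ∀ x, lam ^ (1 / α) ≤ x → deriv φ x < 0 := fun _ ↦
    deriv_neg_of_nonneg_on_Ici hd hd' heq' hint hq_nonneg hφpos
  refine ⟨?_, hderiv_neg, strictAntiOn_of_deriv_neg (convex_Ici _) hd.continuous.continuousOn
    fun x hx ↦ hderiv_neg x (interior_subset hx)⟩
  exact (monotoneOn_deriv_of_nonneg_on_Ici hd' heq' hq_nonneg hφpos).mono
    interior_subset |>.convexOn_of_deriv (convex_Ici _) hd.continuous.continuousOn
    hd.differentiableOn

/-- An eigenfunction `φ` for an eigenvalue `lam > 0` has no zero in `[lam^{1/α}, ∞)`;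
moreover, if `φ > 0` on `[lam^{1/α}, ∞)`, then `φ` is convex there, has negative
derivative there, and is strictly decreasing there. -/
theorem eigenfunction_convex_decreasing (α : ℝ) (hα : 0 < α) (lam : ℝ) (hpos : 0 < lam)
    (hlam : IsEigenvalue α lam) (φ : ℝ → ℝ) (hφ : IsEigenfunction α lam φ) :
    (∀ x : ℝ, lam ^ (1 / α) ≤ x → φ x ≠ 0) ∧
    ((∀ x : ℝ, lam ^ (1 / α) ≤ x → 0 < φ x) →
      ConvexOn ℝ (Set.Ici (lam ^ (1 / α))) φ ∧
      (∀ x : ℝ, lam ^ (1 / α) ≤ x → deriv φ x < 0) ∧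
      StrictAntiOn φ (Set.Ici (lam ^ (1 / α)))) :=
  eigenfunction_convex_decreasing_general α hα lam hpos φ hφ
end

section
/- Every eigenfunction φ of 𝓛 (for any eigenvalue λ) satisfies φ(x) → 0 and φ'(x) → 0 as x → +∞, and likewise as x → −∞. -/
/-! Beyond the point where `|x| ^ α ≥ lam`, the equation reads `φ'' = Q φ` with `Q ≥ 0`.
There `u = φ ^ 2` is convex, `u'' = 2 φ' ^ 2 + 2 Q φ ^ 2 ≥ 0`; as `u` is integrable,
`u' = 2 φ φ'` can never become positive, so `u` decreases, and integrability forces `u → 0`.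
Moreover `(φ' ^ 2)' = Q u' ≤ 0`, so `φ' ^ 2` decreases as well, and its limit vanishes:
otherwise `u'' ≥ 2 φ' ^ 2` would push `u'` above zero. The reflection `x ↦ -x` handles `-∞`. -/

open MeasureTheory

open Filter Set Topology

lemma monotoneOn_Ici_of_hasDerivAt_nonneg {f f' : ℝ → ℝ} {a : ℝ}
    (hf : ∀ x, HasDerivAt f (f' x) x) (hf' : ∀ x ≥ a, 0 ≤ f' x) : MonotoneOn f (Ici a) := by
  refine monotoneOn_of_deriv_nonneg (convex_Ici a)
    (fun x _ => (hf x).continuousAt.continuousWithinAt)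
    (fun x _ => (hf x).differentiableAt.differentiableWithinAt) fun x hx => ?_
  rw [interior_Ici] at hx
  exact (hf x).deriv ▸ hf' x (le_of_lt hx)

lemma antitoneOn_Ici_of_hasDerivAt_nonpos {f f' : ℝ → ℝ} {a : ℝ}
    (hf : ∀ x, HasDerivAt f (f' x) x) (hf' : ∀ x ≥ a, f' x ≤ 0) : AntitoneOn f (Ici a) :=
  fun _ hx _ hy hxy => neg_le_neg_iff.1 <| monotoneOn_Ici_of_hasDerivAt_nonneg
    (fun x => (hf x).neg) (fun x hx => neg_nonneg.2 (hf' x hx)) hx hy hxy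

lemma tendsto_atTop_of_hasDerivAt_ge {g g' : ℝ → ℝ} {c : ℝ} (hc : 0 < c)
    (hg : ∀ x, HasDerivAt g (g' x) x) (hg' : ∀ᶠ x in atTop, c ≤ g' x) :
    Tendsto g atTop atTop := by
  obtain ⟨a, ha⟩ := eventually_atTop.1 hg'
  have hmono : MonotoneOn (fun x => g x - c * x) (Ici a) :=
    monotoneOn_Ici_of_hasDerivAt_nonneg (fun x => (hg x).sub ((hasDerivAt_id x).const_mul c))
      fun x hx => by simpa using ha x hx
  have hlin : Tendsto (fun x => g a - c * a + c * x) atTop atTop :=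
    tendsto_atTop_add_const_left _ _ (tendsto_id.const_mul_atTop hc)
  refine tendsto_atTop_mono' _ ?_ hlin
  filter_upwards [eventually_ge_atTop a] with x hx
  linarith [hmono self_mem_Ici hx hx]

lemma frequently_lt_of_integrableAtFilter_atTop {f : ℝ → ℝ} (hf : IntegrableAtFilter f atTop)
    {ε : ℝ} (hε : 0 < ε) : ∃ᶠ x in atTop, f x < ε := by
  intro hge
  obtain ⟨a, ha⟩ := integrableAtFilter_atTop_iff.1 hf
  obtain ⟨b, hb⟩ := eventually_atTop.1 (hge.mono fun x hx => not_lt.1 hx)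
  have hconst : IntegrableOn (fun _ => ε) (Ici (max a b)) := by
    refine (ha.mono_set (Ici_subset_Ici.2 (le_max_left a b))).mono' aestronglyMeasurable_const ?_
    refine ae_restrict_of_forall_mem measurableSet_Ici fun x hx => ?_
    rw [Real.norm_eq_abs, abs_of_pos hε]
    exact hb x (le_trans (le_max_right a b) hx)
  rw [integrableOn_const_iff] at hconst
  simp [hε.ne', Real.volume_Ici] at hconst

lemma AntitoneOn.tendsto_zero_of_frequently_lt {f : ℝ → ℝ} {a : ℝ} (hf : AntitoneOn f (Ici a))
    (hf₀ : ∀ᶠ x in atTop, 0 ≤ f x) (hsmall : ∀ ε > 0, ∃ᶠ x in atTop, f x < ε) :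
    Tendsto f atTop (𝓝 0) := by
  refine tendsto_order.2 ⟨fun b hb => hf₀.mono fun x hx => hb.trans_le hx, fun ε hε => ?_⟩
  obtain ⟨x₀, hx₀, hx₀a⟩ := ((hsmall ε hε).and_eventually (eventually_ge_atTop a)).exists
  filter_upwards [eventually_ge_atTop x₀] with x hx
  exact (hf hx₀a (hx₀a.trans hx) hx).trans_lt hx₀

lemma tendsto_zero_of_sq_tendsto_zero {g : ℝ → ℝ} {l : Filter ℝ}
    (h : Tendsto (fun x => g x ^ 2) l (𝓝 0)) : Tendsto g l (𝓝 0) := by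
  rw [tendsto_zero_iff_abs_tendsto_zero]
  simpa [Function.comp_def, Real.sqrt_sq_eq_abs] using h.sqrt

lemma integrableAtFilter_atTop_comp_neg {f : ℝ → ℝ} (hf : IntegrableAtFilter f atBot) :
    IntegrableAtFilter (fun x => f (-x)) atTop := by
  obtain ⟨a, ha⟩ := integrableAtFilter_atBot_iff.1 hf
  refine integrableAtFilter_atTop_iff.2 ⟨-a, ?_⟩
  have := ((Measure.measurePreserving_neg (volume : Measure ℝ)).integrableOn_comp_preimage
    (MeasurableEquiv.neg ℝ).measurableEmbedding).2 ha
  simpa [Function.comp_def] using this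

section SecondOrder

variable {φ : ℝ → ℝ}

lemma ContDiff.hasDerivAt_sq (hφ : ContDiff ℝ 2 φ) (x : ℝ) :
    HasDerivAt (fun x => φ x ^ 2) (2 * (φ x * deriv φ x)) x := by
  refine ((hφ.differentiable (by norm_num) x).hasDerivAt.fun_pow 2).congr_deriv ?_
  ring

lemma ContDiff.hasDerivAt_deriv_sq (hφ : ContDiff ℝ 2 φ) (x : ℝ) :
    HasDerivAt (fun x => deriv φ x ^ 2) (2 * (deriv φ x * deriv (deriv φ) x)) x := by
  refine ((hφ.differentiable_deriv_two x).hasDerivAt.fun_pow 2).congr_deriv ?_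
  ring

lemma ContDiff.hasDerivAt_mul_deriv (hφ : ContDiff ℝ 2 φ) (x : ℝ) :
    HasDerivAt (fun x => φ x * deriv φ x) (deriv φ x ^ 2 + φ x * deriv (deriv φ) x) x := by
  refine ((hφ.differentiable (by norm_num) x).hasDerivAt.mul
    (hφ.differentiable_deriv_two x).hasDerivAt).congr_deriv ?_
  ring

variable {R : ℝ}

theorem mul_deriv_nonpos_of_mul_deriv_deriv_nonneg (hφ : ContDiff ℝ 2 φ)
    (hint : IntegrableAtFilter (fun x => φ x ^ 2) atTop)
    (hconv : ∀ x ≥ R, 0 ≤ φ x * deriv (deriv φ) x) : ∀ x ≥ R, φ x * deriv φ x ≤ 0 := by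
  intro a ha
  by_contra! hpos
  have hmono : MonotoneOn (fun x => φ x * deriv φ x) (Ici R) :=
    monotoneOn_Ici_of_hasDerivAt_nonneg hφ.hasDerivAt_mul_deriv
      fun x hx => add_nonneg (sq_nonneg _) (hconv x hx)
  have hgrow : Tendsto (fun x => φ x ^ 2) atTop atTop := by
    refine tendsto_atTop_of_hasDerivAt_ge (by positivity : 0 < 2 * (φ a * deriv φ a))
      hφ.hasDerivAt_sq ?_
    filter_upwards [eventually_ge_atTop a] with x hx
    linarith [hmono ha (mem_Ici.2 (ha.trans hx)) hx]
  obtain ⟨x, hsmall, hlarge⟩ := ((frequently_lt_of_integrableAtFilter_atTop hint one_pos)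
    |>.and_eventually (hgrow.eventually_ge_atTop 1)).exists
  linarith

theorem tendsto_zero_of_mul_deriv_deriv_nonneg (hφ : ContDiff ℝ 2 φ)
    (hint : IntegrableAtFilter (fun x => φ x ^ 2) atTop)
    (hconv : ∀ x ≥ R, 0 ≤ φ x * deriv (deriv φ) x) : Tendsto φ atTop (𝓝 0) := by
  have hanti : AntitoneOn (fun x => φ x ^ 2) (Ici R) :=
    antitoneOn_Ici_of_hasDerivAt_nonpos hφ.hasDerivAt_sq fun x hx => by
      linarith [mul_deriv_nonpos_of_mul_deriv_deriv_nonneg hφ hint hconv x hx]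
  exact tendsto_zero_of_sq_tendsto_zero <| hanti.tendsto_zero_of_frequently_lt
    (.of_forall fun x => sq_nonneg _) fun _ hε => frequently_lt_of_integrableAtFilter_atTop hint hε

theorem tendsto_deriv_zero_of_deriv_mul_deriv_deriv_nonpos (hφ : ContDiff ℝ 2 φ)
    (hint : IntegrableAtFilter (fun x => φ x ^ 2) atTop)
    (hconv : ∀ x ≥ R, 0 ≤ φ x * deriv (deriv φ) x)
    (hdecr : ∀ x ≥ R, deriv φ x * deriv (deriv φ) x ≤ 0) : Tendsto (deriv φ) atTop (𝓝 0) := by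
  have hanti : AntitoneOn (fun x => deriv φ x ^ 2) (Ici R) :=
    antitoneOn_Ici_of_hasDerivAt_nonpos hφ.hasDerivAt_deriv_sq fun x hx => by linarith [hdecr x hx]
  refine tendsto_zero_of_sq_tendsto_zero <| hanti.tendsto_zero_of_frequently_lt
    (.of_forall fun x => sq_nonneg _) fun ε hε hlarge => ?_
  have hgrow : Tendsto (fun x => φ x * deriv φ x) atTop atTop := by
    refine tendsto_atTop_of_hasDerivAt_ge hε hφ.hasDerivAt_mul_deriv ?_
    filter_upwards [hlarge, eventually_ge_atTop R] with x hx hxR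
    linarith [not_lt.1 hx, hconv x hxR]
  obtain ⟨x, hpos, hxR⟩ := ((hgrow.eventually_gt_atTop 0).and (eventually_ge_atTop R)).exists
  linarith [mul_deriv_nonpos_of_mul_deriv_deriv_nonneg hφ hint hconv x hxR]

theorem tendsto_atTop_of_deriv_deriv_eq_mul {Q : ℝ → ℝ} (hφ : ContDiff ℝ 2 φ)
    (hint : IntegrableAtFilter (fun x => φ x ^ 2) atTop) (hQ : ∀ᶠ x in atTop, 0 ≤ Q x)
    (hode : ∀ᶠ x in atTop, deriv (deriv φ) x = Q x * φ x) :
    Tendsto φ atTop (𝓝 0) ∧ Tendsto (deriv φ) atTop (𝓝 0) := by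
  obtain ⟨R, hR⟩ := eventually_atTop.1 (hQ.and hode)
  have hconv : ∀ x ≥ R, 0 ≤ φ x * deriv (deriv φ) x := fun x hx => by
    rw [(hR x hx).2]
    nlinarith [mul_nonneg (hR x hx).1 (mul_self_nonneg (φ x))]
  have hdecr : ∀ x ≥ R, deriv φ x * deriv (deriv φ) x ≤ 0 := fun x hx => by
    rw [(hR x hx).2]
    nlinarith [mul_nonpos_of_nonneg_of_nonpos (hR x hx).1
      (mul_deriv_nonpos_of_mul_deriv_deriv_nonneg hφ hint hconv x hx)]
  exact ⟨tendsto_zero_of_mul_deriv_deriv_nonneg hφ hint hconv,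
    tendsto_deriv_zero_of_deriv_mul_deriv_deriv_nonpos hφ hint hconv hdecr⟩

theorem tendsto_atBot_of_deriv_deriv_eq_mul {Q : ℝ → ℝ} (hφ : ContDiff ℝ 2 φ)
    (hint : IntegrableAtFilter (fun x => φ x ^ 2) atBot) (hQ : ∀ᶠ x in atBot, 0 ≤ Q x)
    (hode : ∀ᶠ x in atBot, deriv (deriv φ) x = Q x * φ x) :
    Tendsto φ atBot (𝓝 0) ∧ Tendsto (deriv φ) atBot (𝓝 0) := by
  have hderiv : deriv (fun x => φ (-x)) = fun x => -deriv φ (-x) :=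
    funext fun x => deriv_comp_neg φ x
  have hderiv2 (x : ℝ) : deriv (deriv fun x => φ (-x)) x = deriv (deriv φ) (-x) := by
    rw [hderiv, deriv.fun_neg, deriv_comp_neg, neg_neg]
  obtain ⟨hlim, hlim'⟩ := tendsto_atTop_of_deriv_deriv_eq_mul (φ := fun x => φ (-x))
    (Q := fun x => Q (-x)) (hφ.comp contDiff_neg) (integrableAtFilter_atTop_comp_neg hint)
    (tendsto_neg_atTop_atBot.eventually hQ)
    ((tendsto_neg_atTop_atBot.eventually hode).mono fun x hx => (hderiv2 x).trans hx)
  refine ⟨by simpa [Function.comp_def] using hlim.comp tendsto_neg_atBot_atTop, ?_⟩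
  simpa [hderiv, Function.comp_def] using (hlim'.comp tendsto_neg_atBot_atTop).neg

end SecondOrder

/-- Every eigenfunction of `𝓛` and its derivative tend to zero at `±∞`. -/
theorem eigenfunction_tendsto_zero (α : ℝ) (hα : 0 < α) (lam : ℝ)
    (φ : ℝ → ℝ) (hφ : IsEigenfunction α lam φ) :
    Filter.Tendsto φ Filter.atTop (nhds 0) ∧
    Filter.Tendsto (deriv φ) Filter.atTop (nhds 0) ∧
    Filter.Tendsto φ Filter.atBot (nhds 0) ∧
    Filter.Tendsto (deriv φ) Filter.atBot (nhds 0) := by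
  obtain ⟨hsmooth, -, hint, heq⟩ := hφ
  have hode (x : ℝ) : deriv (deriv φ) x = (|x| ^ α - lam) * φ x := by linarith [heq x]
  have hpot : Tendsto (fun x : ℝ => |x| ^ α - lam) (atBot ⊔ atTop) atTop :=
    tendsto_atTop_add_const_right _ _ <|
      (tendsto_rpow_atTop hα).comp (tendsto_abs_atBot_atTop.sup tendsto_abs_atTop_atTop)
  have hQ := hpot.eventually_ge_atTop 0
  obtain ⟨htop, htop'⟩ := tendsto_atTop_of_deriv_deriv_eq_mul hsmooth (hint.integrableAtFilter _)
    (hQ.filter_mono le_sup_right) (.of_forall hode)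
  obtain ⟨hbot, hbot'⟩ := tendsto_atBot_of_deriv_deriv_eq_mul hsmooth (hint.integrableAtFilter _)
    (hQ.filter_mono le_sup_left) (.of_forall hode)
  exact ⟨htop, htop', hbot, hbot'⟩
end

section
/- For every T ∈ (0,1) and every ε₁, ε₂ ∈ (0, T/10) with ε₂ ≤ (1−T)/10, there exist functions q_*, q^* : [0,T] → (0,∞) such that: (i) q_* and q^* are nondecreasing and Lipschitz continuous on [0,T], and there is a finite set F ⊂ [0,T] such that both are differentiable at every t ∈ [0,T]∖F; (ii) q_* and q^* are constant on [0,ε₁] and on [T−ε₂, T]; (iii) q_*(t) = (1−t)^{−α} = q^*(t) for all t ∈ [2ε₁, T−2ε₂]; (iv) q_*(t) ≤ (1−t)^{−α} ≤ q^*(t) for all t ∈ [0,T]; (v) for all t ∈ [0,2ε₁]: 1 − 4ε₁ ≤ q_*(t)·(1−t)^α ≤ q^*(t)·(1−t)^α ≤ 1 + 3ε₁; (vi) for all t ∈ [T−2ε₂, T]: 1 − 2ε₂/(1−T) ≤ q_*(t)·(1−t)^α ≤ q^*(t)·(1−t)^α ≤ 1 + 5ε₂/(1−T); (vii) for all t ∈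 [0,T]: 1/2 ≤ q_*(t)·(1−t)^α ≤ q^*(t)·(1−t)^α ≤ 2; (viii) for every t ∈ [0,T]∖F and for q = q_* and q = q^*: q'(t) ≤ (8/(1−t))·q(t); (ix) for q = q_* and q = q^*: ∫₀^T |(1−t)^{−κ} − q(t)^{2/(2+α)}| dt ≤ 10ε₁² + 10ε₂²/(1−T)^{κ+1}. -/
/-!
Both functions are the profile `g s = (1 - s) ^ (-α)` composed with a time change `φ`, a
piecewise affine clock with slopes in `{0, 1, 2}`: the lower clock `φ ≤ t` waits at `0` until `ε₁`
and catches up with the diagonal at `2ε₁`, the upper clock `φ ≥ t` waits at `ε₁` and runs ahead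
from `T - 2ε₂` to reach `T` at `T - ε₂`. Away from these two windows `φ t = t`, and inside them
`|φ t - t|` is at most `ε₁`, resp. `ε₂`. So every two-sided bound compares the ratio
`(1 - t) / (1 - φ t)` with `1`, the integral bound is the mean value theorem for `g`, and the
derivative bound comes from `φ' ≤ 2`, `α ≤ 2` and `1 - φ t ≥ (1 - t) / 2`.
-/

open MeasureTheory

open Set Filter Topology Real

lemma sq_le_rpow_of_le {α m r : ℝ} (hα0 : 0 ≤ α) (hα2 : α ≤ 2) (hm : 0 < m) (hm1 : m ≤ 1)
    (hmr : m ≤ r) : m ^ 2 ≤ r ^ α := by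
  rcases le_total r 1 with hr | hr
  · calc m ^ 2 ≤ r ^ 2 := by gcongr
      _ = r ^ (2 : ℝ) := (rpow_two r).symm
      _ ≤ r ^ α := rpow_le_rpow_of_exponent_ge (hm.trans_le hmr) hr hα2
  · calc m ^ 2 ≤ 1 := pow_le_one₀ hm.le hm1
      _ ≤ r ^ α := one_le_rpow hr hα0

lemma rpow_le_sq_of_le {α r R : ℝ} (hα0 : 0 ≤ α) (hα2 : α ≤ 2) (hr : 0 ≤ r) (hR : 1 ≤ R)
    (hrR : r ≤ R) : r ^ α ≤ R ^ 2 := by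
  rcases le_total r 1 with h | h
  · calc r ^ α ≤ 1 := rpow_le_one hr h hα0
      _ ≤ R ^ 2 := one_le_pow₀ hR
  · calc r ^ α ≤ r ^ (2 : ℝ) := rpow_le_rpow_of_exponent_le h hα2
      _ = r ^ 2 := rpow_two r
      _ ≤ R ^ 2 := by gcongr

lemma rpow_neg_mul_rpow_eq_div_rpow {α u v : ℝ} (hu : 0 ≤ u) (hv : 0 ≤ v) :
    u ^ (-α) * v ^ α = (v / u) ^ α := by
  rw [div_rpow hv hu, rpow_neg hu, div_eq_mul_inv, mul_comm]

lemma one_sub_sq_le_rpow_neg_mul_rpow {α x s t : ℝ} (hα0 : 0 ≤ α) (hα2 : α ≤ 2)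
    (hx0 : 0 ≤ x) (hx1 : x < 1) (hst : s ≤ t) (ht : t < 1) (h : t - s ≤ x * (1 - s)) :
    (1 - x) ^ 2 ≤ (1 - s) ^ (-α) * (1 - t) ^ α := by
  rw [rpow_neg_mul_rpow_eq_div_rpow (by linarith) (by linarith)]
  refine sq_le_rpow_of_le hα0 hα2 (by linarith) (by linarith) ?_
  rw [le_div_iff₀ (by linarith)]
  linarith

lemma rpow_neg_mul_rpow_le_inv_one_sub_sq {α x s t : ℝ} (hα0 : 0 ≤ α) (hα2 : α ≤ 2)
    (hx0 : 0 ≤ x) (hx1 : x < 1) (hts : t ≤ s) (hs : s < 1) (h : s - t ≤ x * (1 - t)) :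
    (1 - s) ^ (-α) * (1 - t) ^ α ≤ ((1 - x) ^ 2)⁻¹ := by
  rw [rpow_neg_mul_rpow_eq_div_rpow (by linarith) (by linarith), ← inv_pow]
  refine rpow_le_sq_of_le hα0 hα2 (div_nonneg (by linarith) (by linarith))
    (one_le_inv₀ (by linarith) |>.2 (by linarith)) ?_
  rw [div_le_iff₀ (by linarith), ← div_eq_inv_mul, le_div_iff₀ (by linarith)]
  linarith

lemma hasDerivAt_one_sub_rpow_neg (p : ℝ) {x : ℝ} (hx : x < 1) :
    HasDerivAt (fun y : ℝ => (1 - y) ^ (-p)) (p * (1 - x) ^ (-p - 1)) x := by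
  have := ((hasDerivAt_id' x).const_sub 1).rpow_const (p := -p)
    (Or.inl (sub_pos.2 hx).ne')
  convert this using 1
  ring

lemma abs_one_sub_rpow_neg_sub_le {p s x y : ℝ} (hp : 0 ≤ p) (hs : s < 1) (hx : x ≤ s)
    (hy : y ≤ s) :
    |(1 - x) ^ (-p) - (1 - y) ^ (-p)| ≤ p * (1 - s) ^ (-p - 1) * |x - y| := by
  have := (convex_Iic s).norm_image_sub_le_of_norm_hasDerivWithin_le
    (C := p * (1 - s) ^ (-p - 1))
    (fun z hz => (hasDerivAt_one_sub_rpow_neg p (lt_of_le_of_lt hz hs)).hasDerivWithinAt)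
    (fun z (hz : z ≤ s) => ?_) hy hx
  · simpa only [Real.norm_eq_abs] using this
  rw [Real.norm_eq_abs, abs_of_nonneg (mul_nonneg hp (rpow_nonneg (by linarith) _))]
  exact mul_le_mul_of_nonneg_left (rpow_le_rpow_of_nonpos (by linarith) (by linarith)
    (by linarith)) hp

lemma lipschitzOnWith_one_sub_rpow_neg {p s : ℝ} (hp : 0 ≤ p) (hs : s < 1) :
    LipschitzOnWith (p * (1 - s) ^ (-p - 1)).toNNReal (fun y : ℝ => (1 - y) ^ (-p)) (Iic s) :=
  LipschitzOnWith.of_dist_le_mul fun x hx y hy => by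
    rw [Real.dist_eq, Real.dist_eq,
      Real.coe_toNNReal _ (mul_nonneg hp (rpow_nonneg (by linarith) _))]
    exact abs_one_sub_rpow_neg_sub_le hp hs hx hy

lemma deriv_one_sub_rpow_neg_comp_le {φ : ℝ → ℝ} {a α t : ℝ} (hα2 : α ≤ 2)
    (hφ : HasDerivAt φ a t) (ha : a ∈ Icc (0 : ℝ) 2) (ht : t < 1)
    (hφt : 8 * |φ t - t| ≤ 1 - t) :
    DifferentiableAt ℝ (fun s => (1 - φ s) ^ (-α)) t ∧
      deriv (fun s => (1 - φ s) ^ (-α)) t ≤ 8 / (1 - t) * (1 - φ t) ^ (-α) := by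
  have hdisp := (abs_le.1 ((le_div_iff₀' (by norm_num : (0:ℝ) < 8)).2 hφt)).2
  have hu : 0 < 1 - φ t := by linarith
  have hd : HasDerivAt (fun s => (1 - φ s) ^ (-α)) (α * (1 - φ t) ^ (-α - 1) * a) t :=
    (hasDerivAt_one_sub_rpow_neg α (by linarith : φ t < 1)).comp t hφ
  refine ⟨hd.differentiableAt, ?_⟩
  rw [hd.deriv, rpow_sub_one hu.ne']
  have hslope : α * a / (1 - φ t) ≤ 8 / (1 - t) := by
    rw [div_le_div_iff₀ hu (by linarith)]
    nlinarith [mul_le_mul hα2 ha.2 ha.1 (by norm_num : (0:ℝ) ≤ 2)]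
  calc α * ((1 - φ t) ^ (-α) / (1 - φ t)) * a = α * a / (1 - φ t) * (1 - φ t) ^ (-α) := by ring
    _ ≤ 8 / (1 - t) * (1 - φ t) ^ (-α) := by gcongr

lemma mul_rpow_neg_sub_one_le_four {p u : ℝ} (hp : p ≤ 1) (hu : 1 / 2 ≤ u) (hu1 : u ≤ 1) :
    p * u ^ (-p - 1) ≤ 4 := by
  have hu0 : 0 < u := by linarith
  calc p * u ^ (-p - 1) ≤ 1 * u ^ (-2 : ℝ) :=
        mul_le_mul hp (rpow_le_rpow_of_exponent_ge hu0 hu1 (by linarith)) (rpow_nonneg hu0.le _)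
          zero_le_one
    _ = (u ^ 2)⁻¹ := by rw [one_mul, rpow_neg hu0.le, rpow_two]
    _ ≤ 4 := by
        rw [inv_le_comm₀ (by positivity) (by norm_num)]
        nlinarith

lemma hasDerivAt_of_eqOn_affine {φ : ℝ → ℝ} {U : Set ℝ} {a b t : ℝ} (hU : U ∈ 𝓝 t)
    (h : ∀ s ∈ U, φ s = a * s + b) : HasDerivAt φ a t := by
  have := ((hasDerivAt_id' t).const_mul a).add_const b
  rw [mul_one] at this
  exact this.congr_of_eventuallyEq (eventually_of_mem hU h)

lemma integral_le_mul_sub_of_abs_le {f : ℝ → ℝ} {a b C : ℝ} (hab : a ≤ b)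
    (h : ∀ x ∈ Ioc a b, |f x| ≤ C) : ∫ x in a..b, f x ≤ C * (b - a) := by
  have := intervalIntegral.norm_integral_le_of_norm_le_const (f := f) (C := C)
    (by rwa [uIoc_of_le hab])
  rw [abs_of_nonneg (sub_nonneg.2 hab)] at this
  exact (le_abs_self _).trans this

lemma integral_abs_one_sub_rpow_neg_sub_le {φ : ℝ → ℝ} {p s δ a b : ℝ} (hp : 0 ≤ p) (hs : s < 1)
    (hab : a ≤ b) (h : ∀ x ∈ Ioc a b, x ≤ s ∧ φ x ≤ s ∧ |x - φ x| ≤ δ) :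
    ∫ x in a..b, |(1 - x) ^ (-p) - (1 - φ x) ^ (-p)| ≤ p * (1 - s) ^ (-p - 1) * δ * (b - a) := by
  refine integral_le_mul_sub_of_abs_le hab fun x hx => ?_
  obtain ⟨hxs, hφs, hδ⟩ := h x hx
  rw [abs_abs]
  exact (abs_one_sub_rpow_neg_sub_le hp hs hxs hφs).trans
    (mul_le_mul_of_nonneg_left hδ (mul_nonneg hp (rpow_nonneg (by linarith : (0 : ℝ) ≤ 1 - s) _)))

structure Admissible (T ε₁ ε₂ : ℝ) : Prop where
  ε₁_pos : 0 < ε₁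
  ε₁_lt : ε₁ < T / 10
  ε₂_pos : 0 < ε₂
  ε₂_lt : ε₂ < T / 10
  ε₂_le : ε₂ ≤ (1 - T) / 10

lemma Admissible.lt_one {T ε₁ ε₂ : ℝ} (hp : Admissible T ε₁ ε₂) : T < 1 := by
  linarith [hp.ε₂_pos, hp.ε₂_le]

structure IsTimeChange (T ε₁ ε₂ : ℝ) (φ : ℝ → ℝ) : Prop where
  monotone : Monotone φ
  lipschitzWith : LipschitzWith 2 φ
  exists_hasDerivAt : ∃ F : Finset ℝ, ∀ t ∉ F, ∃ a ∈ Icc (0 : ℝ) 2, HasDerivAt φ a t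
  le : ∀ t, φ t ≤ T
  eq_left : ∀ t ∈ Icc 0 ε₁, φ t = φ 0
  eq_right : ∀ t ∈ Icc (T - ε₂) T, φ t = φ T
  eq_self : ∀ t ∈ Icc (2 * ε₁) (T - 2 * ε₂), φ t = t
  abs_sub_le_left : ∀ t ∈ Icc 0 (2 * ε₁), |φ t - t| ≤ ε₁
  abs_sub_le_right : ∀ t ∈ Icc (T - 2 * ε₂) T, |φ t - t| ≤ ε₂

namespace IsTimeChange

variable {T ε₁ ε₂ α : ℝ} {φ : ℝ → ℝ}

lemma one_sub_pos (hφ : IsTimeChange T ε₁ ε₂ φ) (hT : T < 1) (t : ℝ) : 0 < 1 - φ t :=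
  sub_pos.2 ((hφ.le t).trans_lt hT)

lemma monotone_rpow (hφ : IsTimeChange T ε₁ ε₂ φ) (hT : T < 1) (hα : 0 ≤ α) :
    Monotone fun t => (1 - φ t) ^ (-α) := fun x y h =>
  rpow_le_rpow_of_nonpos (hφ.one_sub_pos hT y) (by linarith [hφ.monotone h]) (by linarith)

lemma exists_lipschitzWith_rpow (hφ : IsTimeChange T ε₁ ε₂ φ) (hT : T < 1) (hα : 0 ≤ α) :
    ∃ K, LipschitzWith K fun t => (1 - φ t) ^ (-α) :=
  ⟨_, lipschitzOnWith_univ.1 ((lipschitzOnWith_one_sub_rpow_neg hα hT).comp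
    hφ.lipschitzWith.lipschitzOnWith fun t _ => hφ.le t)⟩

lemma eight_mul_abs_sub_le (hφ : IsTimeChange T ε₁ ε₂ φ) (hp : Admissible T ε₁ ε₂) {t : ℝ}
    (ht : t ∈ Icc 0 T) : 8 * |φ t - t| ≤ 1 - t := by
  have ⟨_, _, _, _, _⟩ := hp
  by_cases h₁ : t ≤ 2 * ε₁
  · linarith [hφ.abs_sub_le_left t ⟨ht.1, h₁⟩]
  by_cases h₂ : T - 2 * ε₂ ≤ t
  · linarith [hφ.abs_sub_le_right t ⟨h₂, ht.2⟩, ht.2]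
  rw [hφ.eq_self t ⟨by linarith, by linarith⟩, sub_self, abs_zero]
  linarith

lemma exists_finset_deriv_le (hφ : IsTimeChange T ε₁ ε₂ φ) (hp : Admissible T ε₁ ε₂)
    (hα : α ≤ 2) : ∃ F : Finset ℝ, ∀ t ∈ Icc 0 T, t ∉ F →
      DifferentiableAt ℝ (fun s => (1 - φ s) ^ (-α)) t ∧
      deriv (fun s => (1 - φ s) ^ (-α)) t ≤ 8 / (1 - t) * (1 - φ t) ^ (-α) := by
  obtain ⟨F, hF⟩ := hφ.exists_hasDerivAt
  refine ⟨F, fun t ht htF => ?_⟩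
  obtain ⟨a, ha, hderiv⟩ := hF t htF
  exact deriv_one_sub_rpow_neg_comp_le hα hderiv ha (ht.2.trans_lt hp.lt_one)
    (hφ.eight_mul_abs_sub_le hp ht)

lemma integral_abs_rpow_sub_le_left (hφ : IsTimeChange T ε₁ ε₂ φ) (hp : Admissible T ε₁ ε₂)
    {p : ℝ} (hp0 : 0 ≤ p) (hp1 : p ≤ 1) :
    ∫ t in (0 : ℝ)..(2 * ε₁), |(1 - t) ^ (-p) - (1 - φ t) ^ (-p)| ≤ 8 * ε₁ ^ 2 := by
  have ⟨_, _, _, _, _⟩ := hp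
  have := hp.lt_one
  have hint := integral_abs_one_sub_rpow_neg_sub_le (φ := φ) (δ := ε₁) hp0
    (by linarith : 2 * ε₁ < 1) (by linarith : 0 ≤ 2 * ε₁) fun x hx =>
      ⟨hx.2, (hφ.monotone hx.2).trans (hφ.eq_self _ ⟨le_rfl, by linarith⟩).le,
        abs_sub_comm x (φ x) ▸ hφ.abs_sub_le_left x (Ioc_subset_Icc_self hx)⟩
  have hc := mul_rpow_neg_sub_one_le_four hp1 (by linarith : 1 / 2 ≤ 1 - 2 * ε₁) (by linarith)
  rw [sub_zero] at hint
  nlinarith [mul_le_mul_of_nonneg_right hc (by positivity : 0 ≤ ε₁ * (2 * ε₁))]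

lemma integral_abs_rpow_sub_le_right (hφ : IsTimeChange T ε₁ ε₂ φ) (hT : T < 1) (hε₂ : 0 ≤ ε₂)
    {p : ℝ} (hp0 : 0 ≤ p) (hp1 : p ≤ 1) :
    ∫ t in (T - 2 * ε₂)..T, |(1 - t) ^ (-p) - (1 - φ t) ^ (-p)|
      ≤ 2 * ε₂ ^ 2 / (1 - T) ^ (p + 1) := by
  have hint := integral_abs_one_sub_rpow_neg_sub_le (φ := φ) (δ := ε₂) hp0 hT
    (by linarith : T - 2 * ε₂ ≤ T) fun x hx =>
      ⟨hx.2, hφ.le x, abs_sub_comm x (φ x) ▸ hφ.abs_sub_le_right x (Ioc_subset_Icc_self hx)⟩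
  have hc : p * (1 - T) ^ (-p - 1) ≤ ((1 - T) ^ (p + 1))⁻¹ := by
    rw [← rpow_neg (by linarith), neg_add']
    exact mul_le_of_le_one_left (rpow_nonneg (by linarith) _) hp1
  rw [sub_sub_cancel] at hint
  rw [div_eq_mul_inv]
  nlinarith [mul_le_mul_of_nonneg_right hc (by positivity : 0 ≤ ε₂ * (2 * ε₂))]

lemma integral_abs_rpow_sub_le (hφ : IsTimeChange T ε₁ ε₂ φ) (hp : Admissible T ε₁ ε₂) {p : ℝ}
    (hp0 : 0 ≤ p) (hp1 : p ≤ 1) :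
    ∫ t in (0 : ℝ)..T, |(1 - t) ^ (-p) - (1 - φ t) ^ (-p)|
      ≤ 10 * ε₁ ^ 2 + 10 * ε₂ ^ 2 / (1 - T) ^ (p + 1) := by
  have ⟨_, _, _, _, _⟩ := hp
  have hT := hp.lt_one
  have hg : ContinuousOn (fun y : ℝ => (1 - y) ^ (-p)) (Iic T) :=
    (lipschitzOnWith_one_sub_rpow_neg hp0 hT).continuousOn
  have hf : ContinuousOn (fun t => |(1 - t) ^ (-p) - (1 - φ t) ^ (-p)|) (Icc 0 T) :=
    ((hg.mono Icc_subset_Iic_self).sub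
      (hg.comp hφ.lipschitzWith.continuous.continuousOn fun t _ => hφ.le t)).abs
  have hint : ∀ a b, 0 ≤ a → a ≤ b → b ≤ T →
      IntervalIntegrable (fun t => |(1 - t) ^ (-p) - (1 - φ t) ^ (-p)|) volume a b :=
    fun a b ha hab hb =>
      (hf.mono (by rw [uIcc_of_le hab]; exact Icc_subset_Icc ha hb)).intervalIntegrable
  have hmid : ∫ t in (2 * ε₁)..(T - 2 * ε₂), |(1 - t) ^ (-p) - (1 - φ t) ^ (-p)| = 0 := by
    refine (intervalIntegral.integral_congr fun t ht => ?_).trans intervalIntegral.integral_zero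
    rw [uIcc_of_le (by linarith)] at ht
    simp only [hφ.eq_self t ht, sub_self, abs_zero]
  have hε₂ : 2 * ε₂ ^ 2 / (1 - T) ^ (p + 1) ≤ 10 * ε₂ ^ 2 / (1 - T) ^ (p + 1) := by
    gcongr; norm_num
  rw [← intervalIntegral.integral_add_adjacent_intervals (b := 2 * ε₁)
      (hint _ _ le_rfl (by linarith) (by linarith)) (hint _ _ (by linarith) (by linarith) le_rfl),
    ← intervalIntegral.integral_add_adjacent_intervals (b := T - 2 * ε₂)
      (hint _ _ (by linarith) (by linarith) (by linarith))
      (hint _ _ (by linarith) (by linarith) le_rfl), hmid, zero_add]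
  linarith [sq_nonneg ε₁, hφ.integral_abs_rpow_sub_le_left hp hp0 hp1,
    hφ.integral_abs_rpow_sub_le_right hT hp.ε₂_pos.le hp0 hp1]

lemma integral_abs_rpow_kappa_sub_le (hφ : IsTimeChange T ε₁ ε₂ φ) (hp : Admissible T ε₁ ε₂)
    (hα0 : 0 ≤ α) (hα2 : α ≤ 2) :
    ∫ t in (0 : ℝ)..T, |(1 - t) ^ (-(2 * α / (2 + α))) - ((1 - φ t) ^ (-α)) ^ (2 / (2 + α))|
      ≤ 10 * ε₁ ^ 2 + 10 * ε₂ ^ 2 / (1 - T) ^ (2 * α / (2 + α) + 1) := by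
  have h : ∀ t, ((1 - φ t) ^ (-α)) ^ (2 / (2 + α)) = (1 - φ t) ^ (-(2 * α / (2 + α))) :=
    fun t => by rw [← rpow_mul (hφ.one_sub_pos hp.lt_one t).le]; ring_nf
  simp only [h]
  exact hφ.integral_abs_rpow_sub_le hp (by positivity) (by rw [div_le_one (by linarith)]; linarith)

end IsTimeChange

def lowerClock (T ε₁ ε₂ t : ℝ) : ℝ := max 0 (min (2 * (t - ε₁)) (min t (T - ε₂)))

def upperClock (T ε₁ ε₂ t : ℝ) : ℝ := min T (max ε₁ (max t (2 * t - (T - 2 * ε₂))))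

section Clocks

variable {T ε₁ ε₂ t : ℝ}

lemma lowerClock_of_le (hp : Admissible T ε₁ ε₂) (ht : t ≤ ε₁) : lowerClock T ε₁ ε₂ t = 0 := by
  obtain ⟨_, _, _, _, _⟩ := hp
  simp only [lowerClock, max_def, min_def]; split_ifs <;> linarith

lemma lowerClock_of_mem_Icc_left (hp : Admissible T ε₁ ε₂) (ht : t ∈ Icc ε₁ (2 * ε₁)) :
    lowerClock T ε₁ ε₂ t = 2 * (t - ε₁) := by
  obtain ⟨_, _, _, _, _⟩ := hp
  obtain ⟨_, _⟩ := ht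
  simp only [lowerClock, max_def, min_def]; split_ifs <;> linarith

lemma lowerClock_of_mem_Icc_mid (hp : Admissible T ε₁ ε₂) (ht : t ∈ Icc (2 * ε₁) (T - ε₂)) :
    lowerClock T ε₁ ε₂ t = t := by
  obtain ⟨_, _, _, _, _⟩ := hp
  obtain ⟨_, _⟩ := ht
  simp only [lowerClock, max_def, min_def]; split_ifs <;> linarith

lemma lowerClock_of_ge (hp : Admissible T ε₁ ε₂) (ht : T - ε₂ ≤ t) :
    lowerClock T ε₁ ε₂ t = T - ε₂ := by
  obtain ⟨_, _, _, _, _⟩ := hp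
  simp only [lowerClock, max_def, min_def]; split_ifs <;> linarith

lemma upperClock_of_le (hp : Admissible T ε₁ ε₂) (ht : t ≤ ε₁) : upperClock T ε₁ ε₂ t = ε₁ := by
  obtain ⟨_, _, _, _, _⟩ := hp
  simp only [upperClock, max_def, min_def]; split_ifs <;> linarith

lemma upperClock_of_mem_Icc_mid (hp : Admissible T ε₁ ε₂) (ht : t ∈ Icc ε₁ (T - 2 * ε₂)) :
    upperClock T ε₁ ε₂ t = t := by
  obtain ⟨_, _, _, _, _⟩ := hp
  obtain ⟨_, _⟩ := ht
  simp only [upperClock, max_def, min_def]; split_ifs <;> linarith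

lemma upperClock_of_mem_Icc_right (hp : Admissible T ε₁ ε₂) (ht : t ∈ Icc (T - 2 * ε₂) (T - ε₂)) :
    upperClock T ε₁ ε₂ t = 2 * t - (T - 2 * ε₂) := by
  obtain ⟨_, _, _, _, _⟩ := hp
  obtain ⟨_, _⟩ := ht
  simp only [upperClock, max_def, min_def]; split_ifs <;> linarith

lemma upperClock_of_ge (hp : Admissible T ε₁ ε₂) (ht : T - ε₂ ≤ t) : upperClock T ε₁ ε₂ t = T := by
  obtain ⟨_, _, _, _, _⟩ := hp
  simp only [upperClock, max_def, min_def]; split_ifs <;> linarith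

lemma monotone_lowerClock : Monotone (lowerClock T ε₁ ε₂) := by
  intro x y h
  unfold lowerClock
  gcongr

lemma monotone_upperClock : Monotone (upperClock T ε₁ ε₂) := by
  intro x y h
  unfold upperClock
  gcongr

lemma lipschitzWith_lowerClock : LipschitzWith 2 (lowerClock T ε₁ ε₂) := by
  have hslope : LipschitzWith 2 fun t : ℝ => 2 * (t - ε₁) :=
    LipschitzWith.of_dist_le_mul fun x y => by
      rw [Real.dist_eq, Real.dist_eq, ← mul_sub, sub_sub_sub_cancel_right, abs_mul]
      norm_num
  exact ((hslope.min (LipschitzWith.id.min_const _)).const_max 0).weaken (by norm_num)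

lemma lipschitzWith_upperClock : LipschitzWith 2 (upperClock T ε₁ ε₂) := by
  have hslope : LipschitzWith 2 fun t : ℝ => 2 * t - (T - 2 * ε₂) :=
    LipschitzWith.of_dist_le_mul fun x y => by
      rw [Real.dist_eq, Real.dist_eq, sub_sub_sub_cancel_right, ← mul_sub, abs_mul]
      norm_num
  exact ((LipschitzWith.id.max hslope).const_max _ |>.const_min _).weaken (by norm_num)

lemma lowerClock_le_self (ht : 0 ≤ t) : lowerClock T ε₁ ε₂ t ≤ t :=
  max_le ht ((min_le_right _ _).trans (min_le_left _ _))

lemma sub_lowerClock_le_left (hp : Admissible T ε₁ ε₂) (ht : t ∈ Icc 0 (2 * ε₁)) :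
    t - lowerClock T ε₁ ε₂ t ≤ ε₁ := by
  rcases le_total t ε₁ with h | h
  · rw [lowerClock_of_le hp h]; linarith
  · rw [lowerClock_of_mem_Icc_left hp ⟨h, ht.2⟩]; linarith

lemma sub_lowerClock_le_right (hp : Admissible T ε₁ ε₂) (ht : t ∈ Icc (T - 2 * ε₂) T) :
    t - lowerClock T ε₁ ε₂ t ≤ ε₂ := by
  have ⟨_, _, _, _, _⟩ := hp
  rcases le_total t (T - ε₂) with h | h
  · rw [lowerClock_of_mem_Icc_mid hp ⟨by linarith [ht.1], h⟩]; linarith [hp.ε₂_pos]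
  · rw [lowerClock_of_ge hp h]; linarith [ht.2]

lemma isTimeChange_lowerClock (hp : Admissible T ε₁ ε₂) :
    IsTimeChange T ε₁ ε₂ (lowerClock T ε₁ ε₂) := by
  have ⟨_, _, _, _, _⟩ := hp
  refine ⟨monotone_lowerClock, lipschitzWith_lowerClock, ⟨{ε₁, 2 * ε₁, T - ε₂}, ?_⟩,
    fun t => ?_, fun t ht => ?_, fun t ht => ?_, fun t ht => ?_, fun t ht => ?_, fun t ht => ?_⟩
  · intro t ht
    simp only [Finset.mem_insert, Finset.mem_singleton, not_or] at ht
    obtain ⟨h₁, h₂, h₃⟩ := ht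
    rcases lt_or_gt_of_ne h₁ with h₁ | h₁
    · refine ⟨0, by norm_num, hasDerivAt_of_eqOn_affine (b := 0) (Iio_mem_nhds h₁) fun s hs => ?_⟩
      rw [lowerClock_of_le hp (le_of_lt hs)]; ring
    rcases lt_or_gt_of_ne h₂ with h₂ | h₂
    · refine ⟨2, by norm_num, hasDerivAt_of_eqOn_affine (b := -2 * ε₁) (Ioo_mem_nhds h₁ h₂)
        fun s hs => ?_⟩
      rw [lowerClock_of_mem_Icc_left hp (Ioo_subset_Icc_self hs)]; ring
    rcases lt_or_gt_of_ne h₃ with h₃ | h₃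
    · refine ⟨1, by norm_num, hasDerivAt_of_eqOn_affine (b := 0) (Ioo_mem_nhds h₂ h₃)
        fun s hs => ?_⟩
      rw [lowerClock_of_mem_Icc_mid hp (Ioo_subset_Icc_self hs)]; ring
    · refine ⟨0, by norm_num, hasDerivAt_of_eqOn_affine (b := T - ε₂) (Ioi_mem_nhds h₃)
        fun s hs => ?_⟩
      rw [lowerClock_of_ge hp (le_of_lt hs)]; ring
  · exact max_le (by linarith) ((min_le_right _ _).trans (min_le_right _ _) |>.trans (by linarith))
  · rw [lowerClock_of_le hp ht.2, lowerClock_of_le hp (by linarith)]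
  · rw [lowerClock_of_ge hp ht.1, lowerClock_of_ge hp (by linarith)]
  · exact lowerClock_of_mem_Icc_mid hp ⟨ht.1, by linarith [ht.2]⟩
  · rw [abs_sub_comm, abs_of_nonneg (sub_nonneg.2 (lowerClock_le_self ht.1))]
    exact sub_lowerClock_le_left hp ht
  · rw [abs_sub_comm, abs_of_nonneg (sub_nonneg.2 (lowerClock_le_self (by linarith [ht.1])))]
    exact sub_lowerClock_le_right hp ht

lemma self_le_upperClock (ht : t ≤ T) : t ≤ upperClock T ε₁ ε₂ t :=
  le_min ht ((le_max_left _ _).trans (le_max_right _ _))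

lemma upperClock_le (t : ℝ) : upperClock T ε₁ ε₂ t ≤ T :=
  min_le_left _ _

lemma upperClock_sub_le_left (hp : Admissible T ε₁ ε₂) (ht : t ∈ Icc 0 (2 * ε₁)) :
    upperClock T ε₁ ε₂ t - t ≤ ε₁ * (1 - t) := by
  have ⟨_, _, _, _, _⟩ := hp
  rcases le_total t ε₁ with h | h
  · rw [upperClock_of_le hp h]; nlinarith [ht.1]
  · rw [upperClock_of_mem_Icc_mid hp ⟨h, by linarith [ht.2]⟩]; nlinarith [ht.2]

lemma upperClock_sub_le_right (hp : Admissible T ε₁ ε₂) (ht : t ∈ Icc (T - 2 * ε₂) T) :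
    upperClock T ε₁ ε₂ t - t ≤ ε₂ := by
  rcases le_total t (T - ε₂) with h | h
  · rw [upperClock_of_mem_Icc_right hp ⟨ht.1, h⟩]; linarith
  · rw [upperClock_of_ge hp h]; linarith

lemma isTimeChange_upperClock (hp : Admissible T ε₁ ε₂) :
    IsTimeChange T ε₁ ε₂ (upperClock T ε₁ ε₂) := by
  have ⟨_, _, _, _, _⟩ := hp
  refine ⟨monotone_upperClock, lipschitzWith_upperClock, ⟨{ε₁, T - 2 * ε₂, T - ε₂}, ?_⟩,
    upperClock_le, fun t ht => ?_, fun t ht => ?_, fun t ht => ?_, fun t ht => ?_,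
    fun t ht => ?_⟩
  · intro t ht
    simp only [Finset.mem_insert, Finset.mem_singleton, not_or] at ht
    obtain ⟨h₁, h₂, h₃⟩ := ht
    rcases lt_or_gt_of_ne h₁ with h₁ | h₁
    · refine ⟨0, by norm_num, hasDerivAt_of_eqOn_affine (b := ε₁) (Iio_mem_nhds h₁) fun s hs => ?_⟩
      rw [upperClock_of_le hp (le_of_lt hs)]; ring
    rcases lt_or_gt_of_ne h₂ with h₂ | h₂
    · refine ⟨1, by norm_num, hasDerivAt_of_eqOn_affine (b := 0) (Ioo_mem_nhds h₁ h₂)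
        fun s hs => ?_⟩
      rw [upperClock_of_mem_Icc_mid hp (Ioo_subset_Icc_self hs)]; ring
    rcases lt_or_gt_of_ne h₃ with h₃ | h₃
    · refine ⟨2, by norm_num, hasDerivAt_of_eqOn_affine (b := -(T - 2 * ε₂)) (Ioo_mem_nhds h₂ h₃)
        fun s hs => ?_⟩
      rw [upperClock_of_mem_Icc_right hp (Ioo_subset_Icc_self hs)]; ring
    · refine ⟨0, by norm_num, hasDerivAt_of_eqOn_affine (b := T) (Ioi_mem_nhds h₃)
        fun s hs => ?_⟩
      rw [upperClock_of_ge hp (le_of_lt hs)]; ring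
  · rw [upperClock_of_le hp ht.2, upperClock_of_le hp (by linarith)]
  · rw [upperClock_of_ge hp ht.1, upperClock_of_ge hp (by linarith)]
  · exact upperClock_of_mem_Icc_mid hp ⟨by linarith [ht.1], ht.2⟩
  · rw [abs_of_nonneg (sub_nonneg.2 (self_le_upperClock (by linarith [ht.2])))]
    nlinarith [upperClock_sub_le_left hp ht, ht.1]
  · rw [abs_of_nonneg (sub_nonneg.2 (self_le_upperClock ht.2))]
    exact upperClock_sub_le_right hp ht

end Clocks

section Bounds

variable {T ε₁ ε₂ α t : ℝ}

lemma rpow_lowerClock_le (hα : 0 ≤ α) (ht0 : 0 ≤ t) (ht1 : t < 1) :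
    (1 - lowerClock T ε₁ ε₂ t) ^ (-α) ≤ (1 - t) ^ (-α) :=
  rpow_le_rpow_of_nonpos (by linarith)
    (by linarith [lowerClock_le_self (T := T) (ε₁ := ε₁) (ε₂ := ε₂) ht0]) (by linarith)

lemma rpow_le_rpow_upperClock (hα : 0 ≤ α) (ht : t ≤ T) (hT : T < 1) :
    (1 - t) ^ (-α) ≤ (1 - upperClock T ε₁ ε₂ t) ^ (-α) :=
  rpow_le_rpow_of_nonpos (by linarith [upperClock_le (ε₁ := ε₁) (ε₂ := ε₂) (T := T) t])
    (by linarith [self_le_upperClock (ε₁ := ε₁) (ε₂ := ε₂) ht]) (by linarith)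

lemma rpow_lowerClock_mul_le_rpow_upperClock_mul (hα : 0 ≤ α) (ht : t ∈ Icc 0 T) (hT : T < 1) :
    (1 - lowerClock T ε₁ ε₂ t) ^ (-α) * (1 - t) ^ α ≤
      (1 - upperClock T ε₁ ε₂ t) ^ (-α) * (1 - t) ^ α :=
  mul_le_mul_of_nonneg_right ((rpow_lowerClock_le hα ht.1 (ht.2.trans_lt hT)).trans
    (rpow_le_rpow_upperClock hα ht.2 hT)) (rpow_nonneg (by linarith [ht.2]) _)

lemma one_sub_four_mul_le_rpow_lowerClock_mul (hp : Admissible T ε₁ ε₂) (hα0 : 0 ≤ α)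
    (hα2 : α ≤ 2) (ht : t ∈ Icc 0 (2 * ε₁)) :
    1 - 4 * ε₁ ≤ (1 - lowerClock T ε₁ ε₂ t) ^ (-α) * (1 - t) ^ α := by
  have ⟨_, _, _, _, _⟩ := hp
  have := hp.lt_one
  have hle := lowerClock_le_self (T := T) (ε₁ := ε₁) (ε₂ := ε₂) ht.1
  have hsub := sub_lowerClock_le_left hp ht
  refine le_trans ?_ (one_sub_sq_le_rpow_neg_mul_rpow hα0 hα2 (x := 2 * ε₁) (by linarith)
    (by linarith) hle (by linarith [ht.2]) (by nlinarith [ht.2]))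
  nlinarith

lemma one_sub_two_mul_div_le_rpow_lowerClock_mul (hp : Admissible T ε₁ ε₂) (hα0 : 0 ≤ α)
    (hα2 : α ≤ 2) (ht : t ∈ Icc (T - 2 * ε₂) T) :
    1 - 2 * ε₂ / (1 - T) ≤ (1 - lowerClock T ε₁ ε₂ t) ^ (-α) * (1 - t) ^ α := by
  have ⟨_, _, _, _, _⟩ := hp
  have hT : 0 < 1 - T := by linarith
  have hle := lowerClock_le_self (T := T) (ε₁ := ε₁) (ε₂ := ε₂) (by linarith [ht.1] : 0 ≤ t)
  have hφT := (isTimeChange_lowerClock hp).le t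
  have hsub := sub_lowerClock_le_right hp ht
  have hx : ε₂ / (1 - T) ≤ 1 / 10 := by rw [div_le_iff₀ hT]; linarith
  refine le_trans ?_ (one_sub_sq_le_rpow_neg_mul_rpow hα0 hα2 (x := ε₂ / (1 - T))
    (by positivity) (by linarith) hle (by linarith [ht.2]) ?_)
  · rw [mul_div_assoc]
    nlinarith [sq_nonneg (ε₂ / (1 - T))]
  · calc t - lowerClock T ε₁ ε₂ t ≤ ε₂ / (1 - T) * (1 - T) := by rwa [div_mul_cancel₀ _ hT.ne']
      _ ≤ ε₂ / (1 - T) * (1 - lowerClock T ε₁ ε₂ t) := by gcongr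

lemma half_le_rpow_lowerClock_mul (hp : Admissible T ε₁ ε₂) (hα0 : 0 ≤ α) (hα2 : α ≤ 2)
    (ht : t ∈ Icc 0 T) : 1 / 2 ≤ (1 - lowerClock T ε₁ ε₂ t) ^ (-α) * (1 - t) ^ α := by
  have hle := lowerClock_le_self (T := T) (ε₁ := ε₁) (ε₂ := ε₂) ht.1
  have h8 := (isTimeChange_lowerClock hp).eight_mul_abs_sub_le hp ht
  rw [abs_sub_comm, abs_of_nonneg (sub_nonneg.2 hle)] at h8
  refine le_trans (by norm_num) (one_sub_sq_le_rpow_neg_mul_rpow hα0 hα2 (x := 1 / 8)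
    (by norm_num) (by norm_num) hle (ht.2.trans_lt hp.lt_one) (by linarith))

lemma rpow_upperClock_mul_le_one_add_three_mul (hp : Admissible T ε₁ ε₂) (hα0 : 0 ≤ α)
    (hα2 : α ≤ 2) (ht : t ∈ Icc 0 (2 * ε₁)) :
    (1 - upperClock T ε₁ ε₂ t) ^ (-α) * (1 - t) ^ α ≤ 1 + 3 * ε₁ := by
  have ⟨hε₁, _, _, _, _⟩ := hp
  have := hp.lt_one
  refine (rpow_neg_mul_rpow_le_inv_one_sub_sq hα0 hα2 (x := ε₁) (by linarith) (by linarith)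
    (self_le_upperClock (by linarith [ht.2])) ((upperClock_le t).trans_lt hp.lt_one)
    (upperClock_sub_le_left hp ht)).trans ?_
  rw [inv_le_iff_one_le_mul₀ (by nlinarith)]
  nlinarith [mul_pos (mul_pos hε₁ hε₁) hε₁]

lemma rpow_upperClock_mul_le_one_add_five_mul_div (hp : Admissible T ε₁ ε₂) (hα0 : 0 ≤ α)
    (hα2 : α ≤ 2) (ht : t ∈ Icc (T - 2 * ε₂) T) :
    (1 - upperClock T ε₁ ε₂ t) ^ (-α) * (1 - t) ^ α ≤ 1 + 5 * ε₂ / (1 - T) := by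
  have ⟨_, _, _, _, _⟩ := hp
  have hT : 0 < 1 - T := by linarith
  have hx : ε₂ / (1 - T) ≤ 1 / 10 := by rw [div_le_iff₀ hT]; linarith
  have hx0 : 0 < ε₂ / (1 - T) := by positivity
  have hsub : upperClock T ε₁ ε₂ t - t ≤ ε₂ / (1 - T) * (1 - t) :=
    calc upperClock T ε₁ ε₂ t - t ≤ ε₂ / (1 - T) * (1 - T) := by
          rw [div_mul_cancel₀ _ hT.ne']; exact upperClock_sub_le_right hp ht
      _ ≤ ε₂ / (1 - T) * (1 - t) := by gcongr; exact ht.2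
  refine (rpow_neg_mul_rpow_le_inv_one_sub_sq hα0 hα2 hx0.le (by linarith)
    (self_le_upperClock ht.2) ((upperClock_le t).trans_lt hp.lt_one) hsub).trans ?_
  rw [inv_le_iff_one_le_mul₀ (by nlinarith), mul_div_assoc]
  nlinarith [mul_pos (mul_pos hx0 hx0) hx0]

lemma rpow_upperClock_mul_le_two (hp : Admissible T ε₁ ε₂) (hα0 : 0 ≤ α) (hα2 : α ≤ 2)
    (ht : t ∈ Icc 0 T) : (1 - upperClock T ε₁ ε₂ t) ^ (-α) * (1 - t) ^ α ≤ 2 := by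
  have hle := self_le_upperClock (ε₁ := ε₁) (ε₂ := ε₂) ht.2
  have h8 := (isTimeChange_upperClock hp).eight_mul_abs_sub_le hp ht
  rw [abs_of_nonneg (sub_nonneg.2 hle)] at h8
  refine (rpow_neg_mul_rpow_le_inv_one_sub_sq hα0 hα2 (x := 1 / 8) (by norm_num) (by norm_num)
    hle ((upperClock_le t).trans_lt hp.lt_one) (by linarith)).trans (by norm_num)

end Bounds

theorem construction_q_star_general (α : ℝ) (hα : α ∈ Set.Ioo (0:ℝ) 2)
    (T ε₁ ε₂ : ℝ)
    (hε₁ : ε₁ ∈ Set.Ioo (0:ℝ) (T / 10)) (hε₂ : ε₂ ∈ Set.Ioo (0:ℝ) (T / 10))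
    (hε₂' : ε₂ ≤ (1 - T) / 10) :
    ∃ qs qst : ℝ → ℝ, ∃ F : Finset ℝ,
      -- q_*, q^* take values in (0, ∞)
      (∀ t ∈ Set.Icc (0:ℝ) T, 0 < qs t ∧ 0 < qst t) ∧
      -- (i) nondecreasing, Lipschitz on [0,T], differentiable off a finite set
      MonotoneOn qs (Set.Icc (0:ℝ) T) ∧ MonotoneOn qst (Set.Icc (0:ℝ) T) ∧
      (∃ K : NNReal, LipschitzOnWith K qs (Set.Icc (0:ℝ) T)) ∧
      (∃ K : NNReal, LipschitzOnWith K qst (Set.Icc (0:ℝ) T)) ∧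
      (∀ t ∈ Set.Icc (0:ℝ) T, t ∉ F →
        DifferentiableAt ℝ qs t ∧ DifferentiableAt ℝ qst t) ∧
      -- (ii) constant on [0, ε₁] and on [T - ε₂, T]
      (∀ t ∈ Set.Icc (0:ℝ) ε₁, qs t = qs 0 ∧ qst t = qst 0) ∧
      (∀ t ∈ Set.Icc (T - ε₂) T, qs t = qs T ∧ qst t = qst T) ∧
      -- (iii) equality on the middle part
      (∀ t ∈ Set.Icc (2 * ε₁) (T - 2 * ε₂),
        qs t = (1 - t) ^ (-α) ∧ qst t = (1 - t) ^ (-α)) ∧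
      -- (iv) lower/upper bounds
      (∀ t ∈ Set.Icc (0:ℝ) T, qs t ≤ (1 - t) ^ (-α) ∧ (1 - t) ^ (-α) ≤ qst t) ∧
      -- (v) near 0
      (∀ t ∈ Set.Icc (0:ℝ) (2 * ε₁),
        1 - 4 * ε₁ ≤ qs t * (1 - t) ^ α ∧
        qs t * (1 - t) ^ α ≤ qst t * (1 - t) ^ α ∧
        qst t * (1 - t) ^ α ≤ 1 + 3 * ε₁) ∧
      -- (vi) near T
      (∀ t ∈ Set.Icc (T - 2 * ε₂) T,
        1 - 2 * ε₂ / (1 - T) ≤ qs t * (1 - t) ^ α ∧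
        qs t * (1 - t) ^ α ≤ qst t * (1 - t) ^ α ∧
        qst t * (1 - t) ^ α ≤ 1 + 5 * ε₂ / (1 - T)) ∧
      -- (vii) global comparison
      (∀ t ∈ Set.Icc (0:ℝ) T,
        1 / 2 ≤ qs t * (1 - t) ^ α ∧
        qs t * (1 - t) ^ α ≤ qst t * (1 - t) ^ α ∧
        qst t * (1 - t) ^ α ≤ 2) ∧
      -- (viii) logarithmic derivative bound
      (∀ t ∈ Set.Icc (0:ℝ) T, t ∉ F →
        deriv qs t ≤ (8 / (1 - t)) * qs t ∧
        deriv qst t ≤ (8 / (1 - t)) * qst t) ∧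
      -- (ix) integral bound
      ((∫ t in (0:ℝ)..T,
          |(1 - t) ^ (-(2 * α / (2 + α))) - qs t ^ (2 / (2 + α))|)
        ≤ 10 * ε₁ ^ 2 + 10 * ε₂ ^ 2 / (1 - T) ^ (2 * α / (2 + α) + 1)) ∧
      ((∫ t in (0:ℝ)..T,
          |(1 - t) ^ (-(2 * α / (2 + α))) - qst t ^ (2 / (2 + α))|)
        ≤ 10 * ε₁ ^ 2 + 10 * ε₂ ^ 2 / (1 - T) ^ (2 * α / (2 + α) + 1)) := by
  obtain ⟨hα0, hα2⟩ := hα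
  have hp : Admissible T ε₁ ε₂ := ⟨hε₁.1, hε₁.2, hε₂.1, hε₂.2, hε₂'⟩
  have hT := hp.lt_one
  have h₁ := isTimeChange_lowerClock hp
  have h₂ := isTimeChange_upperClock hp
  obtain ⟨F₁, hF₁⟩ := h₁.exists_finset_deriv_le hp hα2.le
  obtain ⟨F₂, hF₂⟩ := h₂.exists_finset_deriv_le hp hα2.le
  have hF : ∀ {t}, t ∉ F₁ ∪ F₂ → t ∉ F₁ ∧ t ∉ F₂ := Finset.notMem_union.1
  have hL : Icc 0 (2 * ε₁) ⊆ Icc 0 T := Icc_subset_Icc_right (by linarith [hε₁.1, hε₁.2])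
  have hR : Icc (T - 2 * ε₂) T ⊆ Icc 0 T := Icc_subset_Icc_left (by linarith [hε₂.1, hε₂.2])
  have hmid := fun t (ht : t ∈ Icc 0 T) =>
    rpow_lowerClock_mul_le_rpow_upperClock_mul (ε₁ := ε₁) (ε₂ := ε₂) hα0.le ht hT
  refine ⟨fun t => (1 - lowerClock T ε₁ ε₂ t) ^ (-α), fun t => (1 - upperClock T ε₁ ε₂ t) ^ (-α),
    F₁ ∪ F₂, fun t _ => ⟨rpow_pos_of_pos (h₁.one_sub_pos hT t) _,
      rpow_pos_of_pos (h₂.one_sub_pos hT t) _⟩,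
    (h₁.monotone_rpow hT hα0.le).monotoneOn _, (h₂.monotone_rpow hT hα0.le).monotoneOn _,
    (h₁.exists_lipschitzWith_rpow hT hα0.le).imp fun _ hK => hK.lipschitzOnWith,
    (h₂.exists_lipschitzWith_rpow hT hα0.le).imp fun _ hK => hK.lipschitzOnWith,
    fun t ht htF => ⟨(hF₁ t ht (hF htF).1).1, (hF₂ t ht (hF htF).2).1⟩,
    fun t ht => by simp only [h₁.eq_left t ht, h₂.eq_left t ht, and_self],
    fun t ht => by simp only [h₁.eq_right t ht, h₂.eq_right t ht, and_self],
    fun t ht => by simp only [h₁.eq_self t ht, h₂.eq_self t ht, and_self],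
    fun t ht => ⟨rpow_lowerClock_le hα0.le ht.1 (ht.2.trans_lt hT),
      rpow_le_rpow_upperClock hα0.le ht.2 hT⟩,
    fun t ht => ⟨one_sub_four_mul_le_rpow_lowerClock_mul hp hα0.le hα2.le ht, hmid t (hL ht),
      rpow_upperClock_mul_le_one_add_three_mul hp hα0.le hα2.le ht⟩,
    fun t ht => ⟨one_sub_two_mul_div_le_rpow_lowerClock_mul hp hα0.le hα2.le ht, hmid t (hR ht),
      rpow_upperClock_mul_le_one_add_five_mul_div hp hα0.le hα2.le ht⟩,
    fun t ht => ⟨half_le_rpow_lowerClock_mul hp hα0.le hα2.le ht, hmid t ht,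
      rpow_upperClock_mul_le_two hp hα0.le hα2.le ht⟩,
    fun t ht htF => ⟨(hF₁ t ht (hF htF).1).2, (hF₂ t ht (hF htF).2).2⟩,
    h₁.integral_abs_rpow_kappa_sub_le hp hα0.le hα2.le,
    h₂.integral_abs_rpow_kappa_sub_le hp hα0.le hα2.le⟩

/-- Construction of the approximations `q_*` (here `qs`) and `q^*` (here `qst`) of the
inhomogeneity `t ↦ (1-t)^{-α}` on `[0, T]`, with `κ = 2α/(2+α)`. -/
theorem construction_q_star (α : ℝ) (hα : α ∈ Set.Ioo (0:ℝ) 2)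
    (T ε₁ ε₂ : ℝ) (hT : T ∈ Set.Ioo (0:ℝ) 1)
    (hε₁ : ε₁ ∈ Set.Ioo (0:ℝ) (T / 10)) (hε₂ : ε₂ ∈ Set.Ioo (0:ℝ) (T / 10))
    (hε₂' : ε₂ ≤ (1 - T) / 10) :
    ∃ qs qst : ℝ → ℝ, ∃ F : Finset ℝ,
      -- q_*, q^* take values in (0, ∞)
      (∀ t ∈ Set.Icc (0:ℝ) T, 0 < qs t ∧ 0 < qst t) ∧
      -- (i) nondecreasing, Lipschitz on [0,T], differentiable off a finite set
      MonotoneOn qs (Set.Icc (0:ℝ) T) ∧ MonotoneOn qst (Set.Icc (0:ℝ) T) ∧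
      (∃ K : NNReal, LipschitzOnWith K qs (Set.Icc (0:ℝ) T)) ∧
      (∃ K : NNReal, LipschitzOnWith K qst (Set.Icc (0:ℝ) T)) ∧
      (∀ t ∈ Set.Icc (0:ℝ) T, t ∉ F →
        DifferentiableAt ℝ qs t ∧ DifferentiableAt ℝ qst t) ∧
      -- (ii) constant on [0, ε₁] and on [T - ε₂, T]
      (∀ t ∈ Set.Icc (0:ℝ) ε₁, qs t = qs 0 ∧ qst t = qst 0) ∧
      (∀ t ∈ Set.Icc (T - ε₂) T, qs t = qs T ∧ qst t = qst T) ∧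
      -- (iii) equality on the middle part
      (∀ t ∈ Set.Icc (2 * ε₁) (T - 2 * ε₂),
        qs t = (1 - t) ^ (-α) ∧ qst t = (1 - t) ^ (-α)) ∧
      -- (iv) lower/upper bounds
      (∀ t ∈ Set.Icc (0:ℝ) T, qs t ≤ (1 - t) ^ (-α) ∧ (1 - t) ^ (-α) ≤ qst t) ∧
      -- (v) near 0
      (∀ t ∈ Set.Icc (0:ℝ) (2 * ε₁),
        1 - 4 * ε₁ ≤ qs t * (1 - t) ^ α ∧
        qs t * (1 - t) ^ α ≤ qst t * (1 - t) ^ α ∧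
        qst t * (1 - t) ^ α ≤ 1 + 3 * ε₁) ∧
      -- (vi) near T
      (∀ t ∈ Set.Icc (T - 2 * ε₂) T,
        1 - 2 * ε₂ / (1 - T) ≤ qs t * (1 - t) ^ α ∧
        qs t * (1 - t) ^ α ≤ qst t * (1 - t) ^ α ∧
        qst t * (1 - t) ^ α ≤ 1 + 5 * ε₂ / (1 - T)) ∧
      -- (vii) global comparison
      (∀ t ∈ Set.Icc (0:ℝ) T,
        1 / 2 ≤ qs t * (1 - t) ^ α ∧
        qs t * (1 - t) ^ α ≤ qst t * (1 - t) ^ α ∧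
        qst t * (1 - t) ^ α ≤ 2) ∧
      -- (viii) logarithmic derivative bound
      (∀ t ∈ Set.Icc (0:ℝ) T, t ∉ F →
        deriv qs t ≤ (8 / (1 - t)) * qs t ∧
        deriv qst t ≤ (8 / (1 - t)) * qst t) ∧
      -- (ix) integral bound
      ((∫ t in (0:ℝ)..T,
          |(1 - t) ^ (-(2 * α / (2 + α))) - qs t ^ (2 / (2 + α))|)
        ≤ 10 * ε₁ ^ 2 + 10 * ε₂ ^ 2 / (1 - T) ^ (2 * α / (2 + α) + 1)) ∧
      ((∫ t in (0:ℝ)..T,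
          |(1 - t) ^ (-(2 * α / (2 + α))) - qst t ^ (2 / (2 + α))|)
        ≤ 10 * ε₁ ^ 2 + 10 * ε₂ ^ 2 / (1 - T) ^ (2 * α / (2 + α) + 1)) :=
  construction_q_star_general α hα T ε₁ ε₂ hε₁ hε₂ hε₂'
end

section
/- For every κ ∈ (0,1) and all a₁, a₂, a₃, a₄ > 0, there exist C, c > 0 such that for all u ≥ 1 and all v ≥ 0: ∑_{n=1}^∞ n^{a₄} · min(1, exp(−a₁(v − a₂·n))) · exp(−a₃·u·n^κ) ≤ C·e^{−c·u}·(e^{−c·v} + e^{−c·u·v^κ}). -/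
/-!
Write `N = n + 1` and split `exp (-a₃ u N^κ)` into the factors `exp (-a₃ u N^κ / 2)`,
`exp (-a₃ u N^κ / 4) ≤ exp (-c u)` and `exp (-a₃ u N^κ / 4) ≤ exp (-a₃ N^κ / 4)` (as `u, N^κ ≥ 1`).
The first factor times the `min` is at most `exp (-c v)` when `v ≥ 2 a₂ N`, since then
`v - a₂ N ≥ v / 2`, and at most `exp (-c u v^κ)` when `v ≤ 2 a₂ N`, since then
`v^κ ≤ (2 a₂)^κ N^κ`. What remains is the convergent series `∑ N^{a₄} exp (-a₃ N^κ / 4)`.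
-/

open Real Filter Asymptotics Topology

lemma tendsto_rpow_mul_exp_neg_mul_rpow_atTop_nhds_zero (p : ℝ) {b κ : ℝ} (hb : 0 < b)
    (hκ : 0 < κ) : Tendsto (fun x : ℝ => x ^ p * exp (-(b * x ^ κ))) atTop (𝓝 0) := by
  refine ((tendsto_rpow_mul_exp_neg_mul_atTop_nhds_zero (p / κ) b hb).comp
    (tendsto_rpow_atTop hκ)).congr' ?_
  filter_upwards [eventually_ge_atTop 0] with x hx
  simp [← rpow_mul hx, mul_div_cancel₀ p hκ.ne']

lemma summable_nat_add_one_rpow_mul_exp_neg_mul_rpow (p : ℝ) {b κ : ℝ} (hb : 0 < b)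
    (hκ : 0 < κ) :
    Summable (fun n : ℕ => ((n : ℝ) + 1) ^ p * exp (-(b * ((n : ℝ) + 1) ^ κ))) := by
  have hO : (fun x : ℝ => x ^ p * exp (-(b * x ^ κ))) =O[atTop] fun x => x ^ (-2 : ℝ) := by
    have h := (isBigO_refl (fun x : ℝ => x ^ (-2 : ℝ)) atTop).mul
      ((tendsto_rpow_mul_exp_neg_mul_rpow_atTop_nhds_zero (p + 2) hb hκ).isBigO_one ℝ)
    refine h.congr' ?_ (by simp)
    filter_upwards [eventually_gt_atTop 0] with x hx
    rw [← mul_assoc, ← rpow_add hx]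
    ring_nf
  have hnat : Summable (fun n : ℕ => (n : ℝ) ^ p * exp (-(b * (n : ℝ) ^ κ))) :=
    summable_of_isBigO_nat (summable_nat_rpow.2 (by norm_num))
      (hO.comp_tendsto tendsto_natCast_atTop_atTop)
  simpa using (summable_nat_add_iff 1).2 hnat

section TermBound

variable {κ a₁ a₂ a₃ c u v N : ℝ}

lemma min_one_exp_mul_exp_le (hκ : 0 ≤ κ) (ha₂ : 0 ≤ a₂) (hc : 0 ≤ c) (hca₁ : c ≤ a₁ / 2)
    (hca₃ : c * (2 * a₂) ^ κ ≤ a₃ / 2) (hu : 0 ≤ u) (hv : 0 ≤ v) (hN : 0 ≤ N) :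
    min 1 (exp (-(a₁ * (v - a₂ * N)))) * exp (-(a₃ / 2 * u * N ^ κ))
      ≤ exp (-c * v) + exp (-c * u * v ^ κ) := by
  rcases le_total v (2 * a₂ * N) with hsmall | hlarge
  · have hvκ : v ^ κ ≤ (2 * a₂) ^ κ * N ^ κ := by
      rw [← mul_rpow (by positivity) hN]
      exact rpow_le_rpow hv hsmall hκ
    have hexp : c * u * v ^ κ ≤ a₃ / 2 * u * N ^ κ := by
      calc c * u * v ^ κ ≤ c * u * ((2 * a₂) ^ κ * N ^ κ) := by gcongr
        _ = c * (2 * a₂) ^ κ * (u * N ^ κ) := by ring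
        _ ≤ a₃ / 2 * (u * N ^ κ) := by gcongr
        _ = a₃ / 2 * u * N ^ κ := by ring
    calc min 1 (exp (-(a₁ * (v - a₂ * N)))) * exp (-(a₃ / 2 * u * N ^ κ))
        ≤ 1 * exp (-c * u * v ^ κ) := by
          gcongr
          · exact min_le_left _ _
          · linarith
      _ ≤ exp (-c * v) + exp (-c * u * v ^ κ) := by
          rw [one_mul]; exact le_add_of_nonneg_left (exp_pos _).le
  · have hexp : c * v ≤ a₁ * (v - a₂ * N) := by nlinarith
    calc min 1 (exp (-(a₁ * (v - a₂ * N)))) * exp (-(a₃ / 2 * u * N ^ κ))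
        ≤ exp (-c * v) * 1 := by
          gcongr
          · exact (min_le_right _ _).trans (exp_le_exp.2 (by linarith))
          · have ha₃ : 0 ≤ a₃ := by
              have := mul_nonneg hc (rpow_nonneg (by positivity : (0 : ℝ) ≤ 2 * a₂) κ)
              linarith
            exact exp_le_one_iff.2 (by simp only [neg_nonpos]; positivity)
      _ ≤ exp (-c * v) + exp (-c * u * v ^ κ) := by
          rw [mul_one]; exact le_add_of_nonneg_right (exp_pos _).le

lemma rpow_mul_min_one_exp_mul_exp_le (p : ℝ) (hκ : 0 ≤ κ) (ha₂ : 0 ≤ a₂) (hc : 0 ≤ c)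
    (hca₁ : c ≤ a₁ / 2) (hca₃ : c * (2 * a₂) ^ κ ≤ a₃ / 2) (hca₃' : c ≤ a₃ / 4) (hu : 1 ≤ u)
    (hv : 0 ≤ v) (hN : 1 ≤ N) :
    N ^ p * min 1 (exp (-(a₁ * (v - a₂ * N)))) * exp (-(a₃ * u * N ^ κ))
      ≤ exp (-c * u) * (exp (-c * v) + exp (-c * u * v ^ κ))
        * (N ^ p * exp (-(a₃ / 4 * N ^ κ))) := by
  have hNκ : 1 ≤ N ^ κ := one_le_rpow hN hκ
  have hsplit : exp (-(a₃ * u * N ^ κ))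
      ≤ exp (-(a₃ / 2 * u * N ^ κ)) * exp (-c * u) * exp (-(a₃ / 4 * N ^ κ)) := by
    rw [← exp_add, ← exp_add, exp_le_exp]
    nlinarith [mul_le_mul_of_nonneg_left hNκ (by linarith : 0 ≤ u),
      mul_le_mul_of_nonneg_right hu (by linarith : 0 ≤ N ^ κ)]
  have hmin := min_one_exp_mul_exp_le hκ ha₂ hc hca₁ hca₃ (by linarith : (0 : ℝ) ≤ u) hv
    (by linarith : 0 ≤ N)
  calc N ^ p * min 1 (exp (-(a₁ * (v - a₂ * N)))) * exp (-(a₃ * u * N ^ κ))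
      ≤ N ^ p * min 1 (exp (-(a₁ * (v - a₂ * N))))
          * (exp (-(a₃ / 2 * u * N ^ κ)) * exp (-c * u) * exp (-(a₃ / 4 * N ^ κ))) := by
        gcongr
    _ = exp (-c * u) * (min 1 (exp (-(a₁ * (v - a₂ * N)))) * exp (-(a₃ / 2 * u * N ^ κ)))
          * (N ^ p * exp (-(a₃ / 4 * N ^ κ))) := by ring
    _ ≤ exp (-c * u) * (exp (-c * v) + exp (-c * u * v ^ κ))
          * (N ^ p * exp (-(a₃ / 4 * N ^ κ))) := by gcongr

end TermBound

theorem technical_series_bound_general (κ : ℝ) (hκ : κ ∈ Set.Ioo (0:ℝ) 1)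
    (a₁ a₂ a₃ a₄ : ℝ) (h1 : 0 < a₁) (h2 : 0 < a₂) (h3 : 0 < a₃) :
    ∃ C c : ℝ, 0 < C ∧ 0 < c ∧ ∀ u v : ℝ, 1 ≤ u → 0 ≤ v →
      (∑' n : ℕ, ((n : ℝ) + 1) ^ a₄ *
          min 1 (Real.exp (-(a₁ * (v - a₂ * ((n : ℝ) + 1))))) *
          Real.exp (-(a₃ * u * ((n : ℝ) + 1) ^ κ)))
        ≤ C * Real.exp (-c * u) *
          (Real.exp (-c * v) + Real.exp (-c * u * v ^ κ)) := by
  have hκ0 : 0 < κ := hκ.1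
  have hD : 0 < (2 * a₂) ^ κ := by positivity
  set c := min (a₁ / 2) (min (a₃ / 2 / (2 * a₂) ^ κ) (a₃ / 4))
  have hc : 0 < c := by positivity
  have hca₃ : c * (2 * a₂) ^ κ ≤ a₃ / 2 :=
    (le_div_iff₀ hD).1 ((min_le_right _ _).trans (min_le_left _ _))
  have hS := summable_nat_add_one_rpow_mul_exp_neg_mul_rpow a₄ (by positivity : 0 < a₃ / 4) hκ0
  set S := ∑' n : ℕ, ((n : ℝ) + 1) ^ a₄ * exp (-(a₃ / 4 * ((n : ℝ) + 1) ^ κ))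
  have hS0 : 0 ≤ S := tsum_nonneg fun n => by positivity
  refine ⟨S + 1, c, by positivity, hc, fun u v hu hv => ?_⟩
  set E := exp (-c * u) * (exp (-c * v) + exp (-c * u * v ^ κ))
  have hterm (n : ℕ) := rpow_mul_min_one_exp_mul_exp_le (a₁ := a₁) (v := v) a₄ hκ0.le h2.le
    hc.le (min_le_left _ _) hca₃ ((min_le_right _ _).trans (min_le_right _ _)) hu hv
    (by simp : (1 : ℝ) ≤ n + 1)
  have hE : 0 ≤ E := by positivity
  have hmajorant := hS.mul_left E
  have hterm_nonneg (n : ℕ) : 0 ≤ ((n : ℝ) + 1) ^ a₄ *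
      min 1 (exp (-(a₁ * (v - a₂ * ((n : ℝ) + 1))))) * exp (-(a₃ * u * ((n : ℝ) + 1) ^ κ)) := by
    have := le_min zero_le_one (exp_pos (-(a₁ * (v - a₂ * ((n : ℝ) + 1))))).le
    positivity
  calc _ ≤ ∑' n : ℕ, E * (((n : ℝ) + 1) ^ a₄ * exp (-(a₃ / 4 * ((n : ℝ) + 1) ^ κ))) :=
        Summable.tsum_le_tsum hterm (.of_nonneg_of_le hterm_nonneg hterm hmajorant) hmajorant
    _ = E * S := tsum_mul_left
    _ ≤ (S + 1) * exp (-c * u) * (exp (-c * v) + exp (-c * u * v ^ κ)) := by nlinarith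

/-- Technical bound on a series: for `κ ∈ (0,1)` and `a₁, a₂, a₃, a₄ > 0` there exist
`C, c > 0` such that for all `u ≥ 1` and `v ≥ 0`,
`∑_{n ≥ 1} n^{a₄} min(1, e^{-a₁(v - a₂ n)}) e^{-a₃ u n^κ}
  ≤ C e^{-c u} (e^{-c v} + e^{-c u v^κ})`. -/
theorem technical_series_bound (κ : ℝ) (hκ : κ ∈ Set.Ioo (0:ℝ) 1)
    (a₁ a₂ a₃ a₄ : ℝ) (h1 : 0 < a₁) (h2 : 0 < a₂) (h3 : 0 < a₃) (h4 : 0 < a₄) :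
    ∃ C c : ℝ, 0 < C ∧ 0 < c ∧ ∀ u v : ℝ, 1 ≤ u → 0 ≤ v →
      (∑' n : ℕ, ((n : ℝ) + 1) ^ a₄ *
          min 1 (Real.exp (-(a₁ * (v - a₂ * ((n : ℝ) + 1))))) *
          Real.exp (-(a₃ * u * ((n : ℝ) + 1) ^ κ)))
        ≤ C * Real.exp (-c * u) *
          (Real.exp (-c * v) + Real.exp (-c * u * v ^ κ)) :=
  technical_series_bound_general κ hκ a₁ a₂ a₃ a₄ h1 h2 h3
end

section
/- There exist σ > 0, L > 0 and η ∈ (0, 1/2] such that for all 0 ≤ s₀ ≤ t and all continuous functions X, Y : [0,t] → ℝ satisfying X(s) ≤ √2·s and |Y(s)| < σ·s for every s ∈ [s₀, t], one has ∫₀^t b(θ(X(s), Y(s))) ds ≤ t − β ∫_{s₀}^t |Y(s)/(√2·s)|^α · (1 − min(L·(|Y(s)/s|^{2−α} + 1/s), η)) ds. -/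
/-!
Pointwise, write `r = |y| / (√2 s)`. If `|θ(x, y)| < δ` then `x ≥ 0`, and `x ≤ √2 s` gives
`|θ| ≥ |sin θ| ≥ r / √(1 + r²)`; since `u ↦ β u^α - K u²` increases near `0`, (A2) yields
`b(θ) ≤ 1 - β r^α + (β + K) r²`. If `|θ| ≥ δ`, (A1') gives `b(θ) ≤ c ≤ 1 - β σ^α`, which is no
larger. The error `(β + K) r² = β r^α · L r^(2-α)` with `L = (β + K) / β` is absorbed into the
`min` term once `L σ^(2-α) ≤ 1/2`. Integrating this bound over `[s₀, t]`, and `b ≤ 1` over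
`[0, s₀]`, gives the claim.
-/

open MeasureTheory

/-- The angular coordinate of the point `(x, y) ∈ ℝ²`, valued in `(-π, π]`. -/
noncomputable def angle (x y : ℝ) : ℝ := Complex.arg ((x : ℂ) + (y : ℂ) * Complex.I)

open Filter Topology Real Set

lemma eventually_mul_rpow_le (C : ℝ) {p ε : ℝ} (hp : 0 < p) (hε : 0 < ε) :
    ∀ᶠ x in 𝓝 (0 : ℝ), C * x ^ p ≤ ε := by
  have h : Tendsto (fun x : ℝ => C * x ^ p) (𝓝 0) (𝓝 (C * 0 ^ p)) :=
    ((continuousAt_rpow_const 0 p (Or.inr hp.le)).tendsto).const_mul C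
  rw [zero_rpow hp.ne', mul_zero] at h
  exact h.eventually (eventually_le_nhds hε)

lemma abs_div_sqrt_le_abs_sin_angle {x a : ℝ} (y : ℝ) (ha : 0 < a) (hx : |x| ≤ a) :
    |y| / a / √(1 + (|y| / a) ^ 2) ≤ |sin (angle x y)| := by
  rcases eq_or_ne y 0 with rfl | hy
  · simp
  have hxy : 0 < √(x ^ 2 + y ^ 2) := sqrt_pos.2 (by positivity)
  have hsqrt : √(1 + (|y| / a) ^ 2) = √(a ^ 2 + y ^ 2) / a := by
    rw [eq_div_iff ha.ne', ← sqrt_sq ha.le, ← sqrt_mul (by positivity), sqrt_sq ha.le]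
    congr 1
    field_simp
    rw [sq_abs]
  have hx2 : x ^ 2 ≤ a ^ 2 := by simpa [sq_abs] using pow_le_pow_left₀ (abs_nonneg x) hx 2
  rw [hsqrt, div_div_div_cancel_right₀ ha.ne', angle, Complex.sin_arg, Complex.norm_add_mul_I]
  have him : ((x : ℂ) + y * Complex.I).im = y := by simp
  rw [him, abs_div, abs_of_pos hxy]
  exact div_le_div_of_nonneg_left (abs_nonneg y) hxy
    (sqrt_le_sqrt (by linarith : x ^ 2 + y ^ 2 ≤ a ^ 2 + y ^ 2))

lemma rpow_mul_one_sub_sq_le_rpow_div_sqrt {r α : ℝ} (hr : 0 ≤ r) (hα2 : α ≤ 2) :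
    r ^ α * (1 - r ^ 2) ≤ (r / √(1 + r ^ 2)) ^ α := by
  have hsqrt : 1 ≤ √(1 + r ^ 2) := one_le_sqrt.2 (by nlinarith)
  have hpow : √(1 + r ^ 2) ^ α ≤ 1 + r ^ 2 :=
    calc √(1 + r ^ 2) ^ α ≤ √(1 + r ^ 2) ^ (2 : ℝ) := rpow_le_rpow_of_exponent_le hsqrt hα2
      _ = 1 + r ^ 2 := by rw [rpow_two, sq_sqrt (by positivity)]
  have hrα : 0 ≤ r ^ α := rpow_nonneg hr α
  rw [div_rpow hr (sqrt_nonneg _)]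
  calc r ^ α * (1 - r ^ 2) ≤ r ^ α / (1 + r ^ 2) := by
        rw [le_div_iff₀ (by positivity)]
        nlinarith [mul_nonneg hrα (pow_nonneg (sq_nonneg r) 2)]
    _ ≤ r ^ α / √(1 + r ^ 2) ^ α := div_le_div_of_nonneg_left hrα (by positivity) hpow

lemma monotoneOn_mul_rpow_sub_mul_sq {α β K δ : ℝ} (hα : 0 < α) (hα2 : α < 2) (hK : 0 ≤ K)
    (hδ : 2 * K * δ ^ (2 - α) ≤ α * β) :
    MonotoneOn (fun u : ℝ => β * u ^ α - K * u ^ 2) (Icc 0 δ) := by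
  have hderiv : ∀ x : ℝ, 0 < x → HasDerivAt (fun u : ℝ => β * u ^ α - K * u ^ 2)
      (α * β * x ^ (α - 1) - 2 * K * x) x := fun x hx => by
    refine (((hasDerivAt_rpow_const (p := α) (Or.inl hx.ne')).const_mul β).sub
      ((hasDerivAt_pow 2 x).const_mul K)).congr_deriv ?_
    norm_num
    ring
  refine monotoneOn_of_hasDerivWithinAt_nonneg (convex_Icc 0 δ)
    (f' := fun x => α * β * x ^ (α - 1) - 2 * K * x) ?_ ?_ ?_
  · fun_prop (disch := grind)
  · rw [interior_Icc]
    exact fun x hx => (hderiv x hx.1).hasDerivWithinAt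
  · rw [interior_Icc]
    intro x hx
    have hxx : x ^ (2 - α) * x ^ (α - 1) = x := by
      rw [← rpow_add hx.1]
      norm_num
    have hle : 2 * K * x ^ (2 - α) ≤ α * β :=
      le_trans (mul_le_mul_of_nonneg_left
        (rpow_le_rpow hx.1.le hx.2.le (sub_nonneg.2 hα2.le)) (by positivity)) hδ
    nlinarith [mul_le_mul_of_nonneg_right hle (rpow_pos_of_pos hx.1 (α - 1)).le]

lemma mul_sq_le_rpow_mul_min {α L r σ u η : ℝ} (hα2 : α < 2) (hL : 0 ≤ L) (hr : 0 ≤ r)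
    (hrσ : r ≤ σ) (hru : r ^ (2 - α) ≤ u) (hσ : L * σ ^ (2 - α) ≤ η) :
    L * r ^ 2 ≤ r ^ α * min (L * u) η := by
  have hsplit : r ^ 2 = r ^ α * r ^ (2 - α) := by
    rw [← rpow_add' hr (by norm_num), add_sub_cancel, rpow_two]
  have hmin : L * r ^ (2 - α) ≤ min (L * u) η :=
    le_min (mul_le_mul_of_nonneg_left hru hL)
      ((mul_le_mul_of_nonneg_left (rpow_le_rpow hr hrσ (sub_nonneg.2 hα2.le)) hL).trans hσ)
  calc L * r ^ 2 = r ^ α * (L * r ^ (2 - α)) := by rw [hsplit]; ring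
    _ ≤ r ^ α * min (L * u) η := mul_le_mul_of_nonneg_left hmin (rpow_nonneg hr α)

section BranchingRate

variable {α β K σ₀ δ c σ : ℝ} {b : ℝ → ℝ}

lemma apply_angle_le_of_abs_angle_lt (hα : 0 < α) (hα2 : α < 2) (hβ : 0 ≤ β) (hK : 0 ≤ K)
    (hA2 : ∀ θ : ℝ, |θ| ≤ σ₀ → |b θ - (1 - β * |θ| ^ α)| ≤ K * θ ^ 2)
    (hδσ₀ : δ ≤ σ₀) (hδπ : δ ≤ π / 2) (hδK : 2 * K * δ ^ (2 - α) ≤ α * β)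
    {a x y : ℝ} (ha : 0 < a) (hxa : x ≤ a) (hya : |y| ≤ a) (hθ : |angle x y| < δ) :
    b (angle x y) ≤ 1 - β * (|y| / a) ^ α + (β + K) * (|y| / a) ^ 2 := by
  set θ := angle x y
  set r := |y| / a
  set l := r / √(1 + r ^ 2)
  have hx : 0 ≤ x := by
    rcases Complex.abs_arg_lt_pi_div_two_iff.1 (hθ.trans_le hδπ) with h | h
    · simpa using h.le
    · simpa using (congrArg Complex.re h).ge
  have hr : 0 ≤ r := by positivity
  have hr1 : r ≤ 1 := (div_le_one ha).2 hya
  have hl : 0 ≤ l := by positivity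
  have hlr : l ≤ r := div_le_self hr (one_le_sqrt.2 (by nlinarith))
  have hlθ : l ≤ |θ| :=
    (abs_div_sqrt_le_abs_sin_angle y ha (abs_le.2 ⟨by linarith, hxa⟩)).trans abs_sin_le_abs
  have hbθ : b θ ≤ 1 - (β * |θ| ^ α - K * |θ| ^ 2) := by
    have := (abs_le.1 (hA2 θ (hθ.le.trans hδσ₀))).2
    rw [sq_abs]
    linarith
  have hmono : β * l ^ α - K * l ^ 2 ≤ β * |θ| ^ α - K * |θ| ^ 2 :=
    monotoneOn_mul_rpow_sub_mul_sq hα hα2 hK hδK ⟨hl, hlθ.trans hθ.le⟩ ⟨abs_nonneg θ, hθ.le⟩ hlθ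
  have hlα : β * (r ^ α * (1 - r ^ 2)) ≤ β * l ^ α :=
    mul_le_mul_of_nonneg_left (rpow_mul_one_sub_sq_le_rpow_div_sqrt hr hα2.le) hβ
  have hl2 : K * l ^ 2 ≤ K * r ^ 2 := mul_le_mul_of_nonneg_left (pow_le_pow_left₀ hl hlr 2) hK
  have hrα : β * (r ^ α * r ^ 2) ≤ β * r ^ 2 :=
    mul_le_mul_of_nonneg_left (mul_le_of_le_one_left (sq_nonneg r) (rpow_le_one hr hr1 hα.le)) hβ
  linarith

lemma apply_angle_le (hα : 0 < α) (hα2 : α < 2) (hβ : 0 ≤ β) (hK : 0 ≤ K)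
    (hA2 : ∀ θ : ℝ, |θ| ≤ σ₀ → |b θ - (1 - β * |θ| ^ α)| ≤ K * θ ^ 2)
    (hδσ₀ : δ ≤ σ₀) (hδπ : δ ≤ π / 2) (hδK : 2 * K * δ ^ (2 - α) ≤ α * β)
    (hc : ∀ θ ∈ Icc (-π) π, δ ≤ |θ| → b θ ≤ c) (hσ1 : σ ≤ 1) (hσc : β * σ ^ α ≤ 1 - c)
    {a x y : ℝ} (ha : 0 < a) (hxa : x ≤ a) (hy : |y| ≤ σ * a) :
    b (angle x y) ≤ 1 - β * (|y| / a) ^ α + (β + K) * (|y| / a) ^ 2 := by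
  have hr : 0 ≤ |y| / a := by positivity
  have hrσ : |y| / a ≤ σ := (div_le_iff₀ ha).2 hy
  rcases lt_or_ge |angle x y| δ with hθ | hθ
  · exact apply_angle_le_of_abs_angle_lt hα hα2 hβ hK hA2 hδσ₀ hδπ hδK ha hxa
      (hy.trans (mul_le_of_le_one_left ha.le hσ1)) hθ
  · have hθπ : angle x y ∈ Icc (-π) π := ⟨(Complex.neg_pi_lt_arg _).le, Complex.arg_le_pi _⟩
    have hrα : β * (|y| / a) ^ α ≤ β * σ ^ α :=
      mul_le_mul_of_nonneg_left (rpow_le_rpow hr hrσ hα.le) hβ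
    have := mul_nonneg (add_nonneg hβ hK) (sq_nonneg (|y| / a))
    linarith [hc _ hθπ hθ]

lemma apply_angle_le_one_sub_mul (hα : 0 < α) (hα2 : α < 2) (hβ : 0 < β) (hK : 0 ≤ K)
    (hA2 : ∀ θ : ℝ, |θ| ≤ σ₀ → |b θ - (1 - β * |θ| ^ α)| ≤ K * θ ^ 2)
    (hδσ₀ : δ ≤ σ₀) (hδπ : δ ≤ π / 2) (hδK : 2 * K * δ ^ (2 - α) ≤ α * β)
    (hc : ∀ θ ∈ Icc (-π) π, δ ≤ |θ| → b θ ≤ c) (hσ1 : σ ≤ 1) (hσc : β * σ ^ α ≤ 1 - c)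
    {η : ℝ} (hσL : (β + K) / β * σ ^ (2 - α) ≤ η) {s x y : ℝ} (hs : 0 < s) (hx : x ≤ √2 * s)
    (hy : |y| < σ * s) :
    b (angle x y) ≤ 1 - β * (|y / (√2 * s)| ^ α *
      (1 - min ((β + K) / β * (|y / s| ^ (2 - α) + 1 / s)) η)) := by
  have ha : 0 < √2 * s := by positivity
  have hsa : s ≤ √2 * s := le_mul_of_one_le_left hs.le (one_le_sqrt.2 one_le_two)
  have hσ : 0 ≤ σ := pos_of_mul_pos_left ((abs_nonneg y).trans_lt hy) hs.le |>.le
  have hya : |y| ≤ σ * (√2 * s) := hy.le.trans (mul_le_mul_of_nonneg_left hsa hσ)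
  set r := |y| / (√2 * s)
  have hr : |y / (√2 * s)| = r := by rw [abs_div, abs_of_pos ha]
  have hrs : r ≤ |y / s| := by
    rw [abs_div, abs_of_pos hs]
    exact div_le_div_of_nonneg_left (abs_nonneg y) hs hsa
  have hbound := apply_angle_le hα hα2 hβ.le hK hA2 hδσ₀ hδπ hδK hc hσ1 hσc ha hx hya
  have hmin := mul_sq_le_rpow_mul_min hα2 (by positivity) (by positivity) ((div_le_iff₀ ha).2 hya)
    ((rpow_le_rpow (by positivity) hrs (sub_nonneg.2 hα2.le)).trans
      (le_add_of_nonneg_right (one_div_nonneg.2 hs.le))) hσL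
  have hL : β * ((β + K) / β * r ^ 2) = (β + K) * r ^ 2 := by field_simp
  rw [hr]
  linarith [mul_le_mul_of_nonneg_left hmin hβ.le]

end BranchingRate

lemma integrableOn_comp_angle {b X Y : ℝ → ℝ} {s : Set ℝ} {M : ℝ} (hs : IsCompact s)
    (hb : Measurable b) (hbM : ∀ θ, ‖b θ‖ ≤ M) (hX : ContinuousOn X s) (hY : ContinuousOn Y s) :
    IntegrableOn (fun t => b (angle (X t) (Y t))) s := by
  have : IsFiniteMeasure (volume.restrict s) := isFiniteMeasure_restrict.2 hs.measure_lt_top.ne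
  have hangle : Measurable fun p : ℝ × ℝ => angle p.1 p.2 :=
    Complex.measurable_arg.comp (by fun_prop)
  refine Integrable.of_bound ?_ M (Eventually.of_forall fun t => hbM _)
  exact ((hb.comp hangle).comp_aemeasurable ((hX.aemeasurable hs.measurableSet).prodMk
    (hY.aemeasurable hs.measurableSet))).aestronglyMeasurable

lemma intervalIntegral_le_sub_mul_integral {f G : ℝ → ℝ} {a s₀ t β : ℝ} (has : a ≤ s₀)
    (hst : s₀ ≤ t) (hf : IntegrableOn f (Icc a t)) (hG : IntervalIntegrable G volume s₀ t)
    (hf1 : ∀ s ∈ Icc a s₀, f s ≤ 1) (hfG : ∀ s ∈ Icc s₀ t, f s ≤ 1 - β * G s) :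
    ∫ s in a..t, f s ≤ (t - a) - β * ∫ s in s₀..t, G s := by
  have hf₁ : IntervalIntegrable f volume a s₀ :=
    (hf.mono_set (by rw [uIcc_of_le has]; exact Icc_subset_Icc_right hst)).intervalIntegrable
  have hf₂ : IntervalIntegrable f volume s₀ t :=
    (hf.mono_set (by rw [uIcc_of_le hst]; exact Icc_subset_Icc_left has)).intervalIntegrable
  have h₁ : ∫ s in a..s₀, f s ≤ s₀ - a := by
    simpa using intervalIntegral.integral_mono_on has hf₁ intervalIntegrable_const hf1
  have h₂ : ∫ s in s₀..t, f s ≤ (t - s₀) - β * ∫ s in s₀..t, G s := by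
    have := intervalIntegral.integral_mono_on hst hf₂
      (intervalIntegrable_const.sub (hG.const_mul β)) hfG
    rwa [intervalIntegral.integral_sub intervalIntegrable_const (hG.const_mul β),
      intervalIntegral.integral_const, intervalIntegral.integral_const_mul, smul_eq_mul,
      mul_one] at this
  rw [← intervalIntegral.integral_add_adjacent_intervals hf₁ hf₂]
  linarith

theorem branching_rate_upper_bound_general (α β : ℝ)
    (hα : α ∈ Set.Ioo (2/3 : ℝ) 2) (hβ : 0 < β)
    (b : ℝ → ℝ) (hb_meas : Measurable b)
    (hb_range : ∀ θ : ℝ, b θ ∈ Set.Icc (0:ℝ) 1)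
    (hA1 : ∀ ε ∈ Set.Ioc (0:ℝ) Real.pi, ∃ c : ℝ, c < 1 ∧
      ∀ θ ∈ Set.Icc (-Real.pi) Real.pi, ε ≤ |θ| → b θ ≤ c)
    (hA2 : ∃ K : ℝ, 0 < K ∧ ∃ σ₀ : ℝ, 0 < σ₀ ∧
      ∀ θ : ℝ, |θ| ≤ σ₀ → |b θ - (1 - β * |θ| ^ α)| ≤ K * θ ^ 2) :
    ∃ σ : ℝ, 0 < σ ∧ ∃ L : ℝ, 0 < L ∧ ∃ η ∈ Set.Ioc (0:ℝ) (1/2),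
      ∀ s₀ t : ℝ, 0 ≤ s₀ → s₀ ≤ t →
      ∀ X Y : ℝ → ℝ,
        ContinuousOn X (Set.Icc 0 t) → ContinuousOn Y (Set.Icc 0 t) →
        (∀ s ∈ Set.Icc s₀ t, X s ≤ Real.sqrt 2 * s ∧ |Y s| < σ * s) →
        (∫ s in (0:ℝ)..t, b (angle (X s) (Y s)))
          ≤ t - β * ∫ s in s₀..t, |Y s / (Real.sqrt 2 * s)| ^ α *
              (1 - min (L * (|Y s / s| ^ (2 - α) + 1 / s)) η) := by
  obtain ⟨hα0, hα2⟩ : 0 < α ∧ α < 2 := ⟨by linarith [hα.1], hα.2⟩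
  obtain ⟨K, hK, σ₀, hσ₀, hA2⟩ := hA2
  obtain ⟨δ, hδ, ⟨hδσ₀, hδπ⟩, hδK⟩ := ((eventually_le_nhds hσ₀).and
    (eventually_le_nhds (by positivity : 0 < π / 2))).and
    (eventually_mul_rpow_le (2 * K) (sub_pos.2 hα2) (by positivity : 0 < α * β)) |>.exists_gt
  obtain ⟨c, hc1, hc⟩ := hA1 δ ⟨hδ, by linarith [pi_pos]⟩
  obtain ⟨σ, hσ, ⟨hσ1, hσc⟩, hσL⟩ := ((eventually_le_nhds one_pos).and
    (eventually_mul_rpow_le β hα0 (sub_pos.2 hc1))).and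
    (eventually_mul_rpow_le ((β + K) / β) (sub_pos.2 hα2) one_half_pos) |>.exists_gt
  refine ⟨σ, hσ, (β + K) / β, by positivity, 1 / 2, ⟨one_half_pos, le_rfl⟩,
    fun s₀ t hs₀ hst X Y hX hY hXY => ?_⟩
  have hs₀pos : 0 < s₀ :=
    pos_of_mul_pos_right ((abs_nonneg _).trans_lt (hXY s₀ ⟨le_rfl, hst⟩).2) hσ.le
  have hG : ContinuousOn (fun s => |Y s / (√2 * s)| ^ α *
      (1 - min ((β + K) / β * (|Y s / s| ^ (2 - α) + 1 / s)) (1 / 2))) (Icc s₀ t) := by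
    have hY' := hY.mono (Icc_subset_Icc_left hs₀)
    have : ∀ s ∈ Icc s₀ t, s ≠ 0 := fun s hs => (hs₀pos.trans_le hs.1).ne'
    fun_prop (disch := grind)
  have hb_norm : ∀ θ, ‖b θ‖ ≤ 1 := fun θ => by
    rw [norm_eq_abs, abs_of_nonneg (hb_range θ).1]; exact (hb_range θ).2
  simpa using intervalIntegral_le_sub_mul_integral hs₀ hst
    (integrableOn_comp_angle isCompact_Icc hb_meas hb_norm hX hY)
    (hG.intervalIntegrable_of_Icc hst) (fun s _ => (hb_range _).2) fun s hs =>
      apply_angle_le_one_sub_mul hα0 hα2 hβ hK.le hA2 hδσ₀ hδπ hδK hc hσ1 hσc hσL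
        (hs₀pos.trans_le hs.1) (hXY s hs).1 (hXY s hs).2

/-- Upper bound on the branching rate along trajectories staying below the line
`s ↦ √2 s` with small angle: there exist `σ, L > 0` and `η ∈ (0, 1/2]` such that
`∫₀ᵗ b(θ_s) ds ≤ t - β ∫_{s₀}^t |Y_s/(√2 s)|^α (1 - min(L(|Y_s/s|^{2-α} + 1/s), η)) ds`. -/
theorem branching_rate_upper_bound (α β : ℝ)
    (hα : α ∈ Set.Ioo (2/3 : ℝ) 2) (hβ : 0 < β)
    (b : ℝ → ℝ) (hb_meas : Measurable b)
    (hb_range : ∀ θ : ℝ, b θ ∈ Set.Icc (0:ℝ) 1)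
    (hb_per : ∀ θ : ℝ, b (θ + 2 * Real.pi) = b θ)
    (hA1 : ∀ ε ∈ Set.Ioc (0:ℝ) Real.pi, ∃ c : ℝ, c < 1 ∧
      ∀ θ ∈ Set.Icc (-Real.pi) Real.pi, ε ≤ |θ| → b θ ≤ c)
    (hA2 : ∃ K : ℝ, 0 < K ∧ ∃ σ₀ : ℝ, 0 < σ₀ ∧
      ∀ θ : ℝ, |θ| ≤ σ₀ → |b θ - (1 - β * |θ| ^ α)| ≤ K * θ ^ 2) :
    ∃ σ : ℝ, 0 < σ ∧ ∃ L : ℝ, 0 < L ∧ ∃ η ∈ Set.Ioc (0:ℝ) (1/2),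
      ∀ s₀ t : ℝ, 0 ≤ s₀ → s₀ ≤ t →
      ∀ X Y : ℝ → ℝ,
        ContinuousOn X (Set.Icc 0 t) → ContinuousOn Y (Set.Icc 0 t) →
        (∀ s ∈ Set.Icc s₀ t, X s ≤ Real.sqrt 2 * s ∧ |Y s| < σ * s) →
        (∫ s in (0:ℝ)..t, b (angle (X s) (Y s)))
          ≤ t - β * ∫ s in s₀..t, |Y s / (Real.sqrt 2 * s)| ^ α *
              (1 - min (L * (|Y s / s| ^ (2 - α) + 1 / s)) η) :=
  branching_rate_upper_bound_general α β hα hβ b hb_meas hb_range hA1 hA2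
end

section
/- For all α, L, a, b̂ > 0 there exists η ∈ (0, 1/2] such that for every r ≥ (2L)^{1/b̂}, the map y ↦ (y/r)^α · (1 − min(L·((y/r)^a + r^{−b̂}), η)) is nondecreasing on [0, ∞). -/
/-!
Put `u = y / r` and `K = L r^(-b̂) ∈ [0, 1/2]`, and take `η = α / (2(α + a))`. Once
`L u^a + K ≥ η` the map is `u^α (1 - η)`, which is monotone. Before that threshold it is
`u^α (1 - K) - L u^(α+a)`, whose derivative `u^(α-1) (α (1 - K) - (α + a) L u^a)` is
nonnegative because `(α + a) L u^a ≤ (α + a) η = α / 2 ≤ α (1 - K)`. The two pieces meet at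
the threshold, so the map is monotone on all of `[0, ∞)`.
-/

open Real Set

theorem monotoneOn_rpow_mul_sub_mul_rpow {α a L c t : ℝ} (hα : 0 < α) (ha : 0 < a)
    (hL : 0 ≤ L) (ht : (α + a) * (L * t ^ a) ≤ α * c) :
    MonotoneOn (fun u => u ^ α * (c - L * u ^ a)) (Icc 0 t) := by
  have hform : EqOn (fun u => c * u ^ α - L * u ^ (α + a))
      (fun u => u ^ α * (c - L * u ^ a)) (Icc 0 t) := fun u hu => by
    simp only [rpow_add' hu.1 (by positivity : α + a ≠ 0)]; ring
  refine (monotoneOn_of_hasDerivWithinAt_nonneg (convex_Icc 0 t)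
    (f' := fun u => c * (α * u ^ (α - 1)) - L * ((α + a) * u ^ (α + a - 1))) ?_ ?_ ?_).congr hform
  · exact (continuousOn_id.rpow_const fun _ _ => Or.inr hα.le).const_smul c |>.sub
      ((continuousOn_id.rpow_const fun _ _ => Or.inr (by positivity)).const_smul L)
  · rw [interior_Icc]
    intro u hu
    exact (((hasDerivAt_rpow_const (Or.inl hu.1.ne')).const_mul c).sub
      ((hasDerivAt_rpow_const (Or.inl hu.1.ne')).const_mul L)).hasDerivWithinAt
  · rw [interior_Icc]
    intro u ⟨hu0, hut⟩
    have hsplit : u ^ (α + a - 1) = u ^ (α - 1) * u ^ a := by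
      rw [← rpow_add hu0]; ring_nf
    have hkey : (α + a) * (L * u ^ a) ≤ α * c :=
      le_trans (by gcongr) ht
    have hpow : 0 ≤ u ^ (α - 1) := rpow_nonneg hu0.le _
    rw [hsplit]
    nlinarith [mul_le_mul_of_nonneg_left hkey hpow]

theorem monotoneOn_rpow_mul_one_sub_min_of_le {α a L K η t : ℝ} (hα : 0 < α) (ha : 0 < a)
    (hL : 0 ≤ L) (hη : η ≤ 1) (ht : 0 ≤ t) (hηt : η ≤ L * t ^ a + K) :
    MonotoneOn (fun u => u ^ α * (1 - min (L * u ^ a + K) η)) (Ici t) := by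
  intro u hu v hv huv
  have hmin : ∀ w ∈ Ici t, min (L * w ^ a + K) η = η := fun w hw =>
    min_eq_right (hηt.trans (by gcongr; exact hw))
  simp only [hmin u hu, hmin v hv]
  exact mul_le_mul_of_nonneg_right (rpow_le_rpow (ht.trans hu) huv hα.le) (by linarith)

theorem mul_rpow_neg_le_half_of_le {L r b : ℝ} (hL : 0 < L) (hb : 0 < b)
    (hr : (2 * L) ^ (1 / b) ≤ r) : L * r ^ (-b) ≤ 1 / 2 := by
  have hr0 : 0 < r := (rpow_pos_of_pos (by positivity) _).trans_le hr
  rw [one_div, rpow_inv_le_iff_of_pos (by positivity) hr0.le hb] at hr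
  rw [rpow_neg hr0.le, ← div_eq_mul_inv, div_le_iff₀ (by positivity)]
  linarith

theorem monotoneOn_rpow_mul_one_sub_min {α a L K η : ℝ} (hα : 0 < α) (ha : 0 < a) (hL : 0 < L)
    (hK : 0 ≤ K) (hη : (α + a) * η ≤ α * (1 - K)) :
    MonotoneOn (fun u => u ^ α * (1 - min (L * u ^ a + K) η)) (Ici 0) := by
  have hη1 : η ≤ 1 := by nlinarith
  rcases le_or_gt η K with hηK | hKη
  · exact monotoneOn_rpow_mul_one_sub_min_of_le hα ha hL.le hη1 le_rfl
      (by simpa [zero_rpow ha.ne'] using hηK)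
  -- `u₀` is where `L * u ^ a + K` reaches `η`.
  set u₀ := ((η - K) / L) ^ a⁻¹
  have hu₀ : 0 ≤ u₀ := rpow_nonneg (div_nonneg (by linarith) hL.le) _
  have hLu₀ : L * u₀ ^ a = η - K := by
    rw [rpow_inv_rpow (div_nonneg (by linarith) hL.le) ha.ne']
    field_simp
  rw [← Icc_union_Ici_eq_Ici hu₀]
  refine MonotoneOn.union_right ?_ (monotoneOn_rpow_mul_one_sub_min_of_le hα ha hL.le hη1 hu₀
    (by linarith)) (isGreatest_Icc hu₀) isLeast_Ici
  refine (monotoneOn_rpow_mul_sub_mul_rpow (c := 1 - K) hα ha hL.le ?_).congr fun u hu => ?_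
  · rw [hLu₀]
    nlinarith
  · have : L * u ^ a ≤ L * u₀ ^ a := by gcongr; exacts [hu.1, hu.2]
    simp only [min_eq_left (by linarith : L * u ^ a + K ≤ η)]
    ring

/-- For all `α, L, a, b̂ > 0` there exists `η ∈ (0, 1/2]` such that for every
`r ≥ (2L)^{1/b̂}` the map `y ↦ (y/r)^α (1 - min(L((y/r)^a + r^{-b̂}), η))` is
nondecreasing on `[0, ∞)`. -/
theorem exists_eta_monotone (α L a bh : ℝ)
    (hα : 0 < α) (hL : 0 < L) (ha : 0 < a) (hbh : 0 < bh) :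
    ∃ η ∈ Set.Ioc (0:ℝ) (1/2),
      ∀ r : ℝ, (2 * L) ^ (1 / bh) ≤ r →
        MonotoneOn
          (fun y : ℝ => (y / r) ^ α * (1 - min (L * ((y / r) ^ a + r ^ (-bh))) η))
          (Set.Ici (0:ℝ)) := by
  refine ⟨α / (2 * (α + a)), ⟨by positivity, ?_⟩, fun r hr => ?_⟩
  · rw [div_le_iff₀ (by positivity)]
    linarith
  have hr0 : 0 < r := (rpow_pos_of_pos (by positivity) _).trans_le hr
  have hK := mul_rpow_neg_le_half_of_le hL hbh hr
  have hmono := monotoneOn_rpow_mul_one_sub_min hα ha hL (η := α / (2 * (α + a)))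
    (mul_nonneg hL.le (rpow_nonneg hr0.le _)) (by field_simp; linarith)
  have hdiv : MonotoneOn (· / r) (Ici (0 : ℝ)) := fun x _ y _ hxy =>
    div_le_div_of_nonneg_right hxy hr0.le
  simpa only [Function.comp_def, mul_add] using
    hmono.comp hdiv fun y (hy : 0 ≤ y) => div_nonneg hy hr0.le
end
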